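/- arXiv:1803.04525 — 6 statements merged into one kernel-verified Lean document; each statement's English description precedes it below -/
import Mathlib

section
/- Uniform control of the lower Hamiltonian at optimizing points (Lemma 4.9): Let E be a d-dimensional convex polyhedron, {H_J} a generating set of Hamiltonians, Υ a good containment function for {H_J}, and Ψ a good penalization function. Fix λ > 0, a bounded continuous h : E → ℝ, and let v be a viscosity supersolution of f − λH_‡f = h; let u : E → ℝ be bounded and upper semicontinuous. For every ε ∈ (0,1) and α > 0 let x_{α,ε}, y_{α,ε} ∈ E attain sup_{x,y∈E} [ u(x)/(1−ε) − v(y)/(1+ε) − αΨ(x,y) − (ε/(1−ε))Υ(x) − (ε/(1+ε))Υ(y) ]. Then sup_{ε∈(0,1), α>0} H_‡( y_{α,ε}, α·∇_xΨ(x_{α,ε}, y_{α,ε}) ) < ∞. -/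
open Filter Set
open scoped ENNReal

noncomputable section

/-- `ℝ^d` with the Euclidean structure. -/
abbrev Euc (d : ℕ) := EuclideanSpace ℝ (Fin d)

/-- The `d`-dimensional convex polyhedron
`E = (⋂ᵢ B_{xᵢ,vᵢ}) ∩ (⋂ⱼ B°_{yⱼ,wⱼ})` determined by the data `xs, vs, ys, ws`. -/
def polyE {d k l : ℕ} (xs vs : Fin k → Euc d) (ys ws : Fin l → Euc d) : Set (Euc d) :=
  {z | (∀ i, 0 ≤ (inner ℝ (z - xs i) (vs i) : ℝ)) ∧ ∀ j, 0 < (inner ℝ (z - ys j) (ws j) : ℝ)}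

/-- `E_J = E ∩ ⋂_{i∈J} (B_{xᵢ,vᵢ} \ B°_{xᵢ,vᵢ})`. -/
def polyEJ {d k l : ℕ} (xs vs : Fin k → Euc d) (ys ws : Fin l → Euc d)
    (J : Finset (Fin k)) : Set (Euc d) :=
  {z ∈ polyE xs vs ys ws | ∀ i ∈ J, (inner ℝ (z - xs i) (vs i) : ℝ) = 0}

/-- `Γ_J = ⋂_{i∈J} B_{0,vᵢ}` (with `Γ_∅ = ℝ^d`). -/
def GammaJ {d k : ℕ} (vs : Fin k → Euc d) (J : Finset (Fin k)) : Set (Euc d) :=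
  {w | ∀ i ∈ J, 0 ≤ (inner ℝ (w) (vs i) : ℝ)}

/-- The defining property of a `d`-dimensional convex polyhedron: `E` is contained in
the closure of its interior. -/
def IsPolyhedron {d k l : ℕ} (xs vs : Fin k → Euc d) (ys ws : Fin l → Euc d) : Prop :=
  polyE xs vs ys ws ⊆ closure (interior (polyE xs vs ys ws))

/-- `{H_J}` is a generating set of Hamiltonians: each `H_J` is convex in `p`,
continuously differentiable on `E_J × ℝ^d` (with `p`-gradient `DpH J`), and the
`p`-gradient takes values in `Γ_J`. -/
def IsGenerating {d k l : ℕ} (xs vs : Fin k → Euc d) (ys ws : Fin l → Euc d)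
    (H : Finset (Fin k) → Euc d → Euc d → ℝ)
    (DpH : Finset (Fin k) → Euc d → Euc d → Euc d) : Prop :=
  ∀ J : Finset (Fin k),
    (∀ x ∈ polyEJ xs vs ys ws J, ConvexOn ℝ univ (H J x)) ∧
    ContDiffOn ℝ 1 (fun q : Euc d × Euc d => H J q.1 q.2)
      (polyEJ xs vs ys ws J ×ˢ univ) ∧
    (∀ x ∈ polyEJ xs vs ys ws J, ∀ p, HasGradientAt (fun p' => H J x p') (DpH J x p) p) ∧
    ContinuousOn (fun q : Euc d × Euc d => DpH J q.1 q.2)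
      (polyEJ xs vs ys ws J ×ˢ univ) ∧
    (∀ x ∈ polyEJ xs vs ys ws J, ∀ p, DpH J x p ∈ GammaJ vs J)

/-- The upper Hamiltonian `H_†(x,p) = max{H_J(x,p) : x ∈ E_J}`. -/
def Hdag {d k l : ℕ} (xs vs : Fin k → Euc d) (ys ws : Fin l → Euc d)
    (H : Finset (Fin k) → Euc d → Euc d → ℝ) (x p : Euc d) : ℝ :=
  sSup {r : ℝ | ∃ J : Finset (Fin k), x ∈ polyEJ xs vs ys ws J ∧ r = H J x p}

/-- The lower Hamiltonian `H_‡(x,p) = min{H_J(x,p) : x ∈ E_J}`. -/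
def Hddag {d k l : ℕ} (xs vs : Fin k → Euc d) (ys ws : Fin l → Euc d)
    (H : Finset (Fin k) → Euc d → Euc d → ℝ) (x p : Euc d) : ℝ :=
  sInf {r : ℝ | ∃ J : Finset (Fin k), x ∈ polyEJ xs vs ys ws J ∧ r = H J x p}

/-- `Υ` is a good containment function for the generating set `{H_J}`. -/
def GoodContainment {d k l : ℕ} (xs vs : Fin k → Euc d) (ys ws : Fin l → Euc d)
    (H : Finset (Fin k) → Euc d → Euc d → ℝ) (Υ : Euc d → ℝ) : Prop :=
  (∀ x ∈ polyE xs vs ys ws, 0 ≤ Υ x) ∧ (∃ x₀ ∈ polyE xs vs ys ws, Υ x₀ = 0) ∧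
  ContDiff ℝ 2 Υ ∧
  (∀ c : ℝ, 0 ≤ c → IsCompact {x ∈ polyE xs vs ys ws | Υ x ≤ c}) ∧
  ∃ C : ℝ, ∀ J : Finset (Fin k), ∀ z ∈ polyEJ xs vs ys ws J,
    H J z (gradient Υ z) ≤ C

/-- The Lagrangian `L_J(x,v) = sup_p (⟨p,v⟩ − H_J(x,p))`, with values in `[0,∞]`. -/
def LagJ {d k : ℕ} (H : Finset (Fin k) → Euc d → Euc d → ℝ)
    (J : Finset (Fin k)) (x w : Euc d) : ℝ≥0∞ :=
  ⨆ p : Euc d, ENNReal.ofReal ((inner ℝ (p) (w) : ℝ) - H J x p)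

/-- The Lagrangian `L(x,v) = sup_p (⟨p,v⟩ − H_†(x,p))`, with values in `[0,∞]`. -/
def Lag {d k l : ℕ} (xs vs : Fin k → Euc d) (ys ws : Fin l → Euc d)
    (H : Finset (Fin k) → Euc d → Euc d → ℝ) (x w : Euc d) : ℝ≥0∞ :=
  ⨆ p : Euc d, ENNReal.ofReal ((inner ℝ (p) (w) : ℝ) - Hdag xs vs ys ws H x p)

/-- The auxiliary Lagrangian `L̂(x,v)`, infimum over convex decompositions
`v = Σ λ_J v_J` (with `λ_J = 0` for `J` with `x ∉ E_J`) of `Σ λ_J L_J(x,v_J)`. -/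
def LagHat {d k l : ℕ} (xs vs : Fin k → Euc d) (ys ws : Fin l → Euc d)
    (H : Finset (Fin k) → Euc d → Euc d → ℝ) (x w : Euc d) : ℝ≥0∞ :=
  sInf {r : ℝ≥0∞ | ∃ (lam : Finset (Fin k) → ℝ) (wv : Finset (Fin k) → Euc d),
    (∀ J, 0 ≤ lam J) ∧ (∀ J, x ∉ polyEJ xs vs ys ws J → lam J = 0) ∧
    (∑ J : Finset (Fin k), lam J) = 1 ∧ (∑ J : Finset (Fin k), lam J • wv J) = w ∧
    r = ∑ J : Finset (Fin k), ENNReal.ofReal (lam J) * LagJ H J x (wv J)}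

/-- `Ψ` is a good penalization function on `E`: nonnegative, vanishing exactly on the
diagonal, twice continuously differentiable in both coordinates, and with
antisymmetric gradients `∇_x Ψ(x,y) = −∇_y Ψ(x,y)`. -/
def GoodPenalization {d : ℕ} (E : Set (Euc d)) (Ψ : Euc d → Euc d → ℝ) : Prop :=
  (∀ x y, 0 ≤ Ψ x y) ∧ (∀ x ∈ E, ∀ y ∈ E, (Ψ x y = 0 ↔ x = y)) ∧
  ContDiff ℝ 2 (fun q : Euc d × Euc d => Ψ q.1 q.2) ∧
  ∀ x y : Euc d, gradient (fun x' => Ψ x' y) x = - gradient (fun y' => Ψ x y') y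

/-- Viscosity subsolution of `f − λ·H f = h` on `E`; test functions are compactly
supported `C²` functions. -/
def ViscositySubsolution {d : ℕ} (E : Set (Euc d)) (HH : Euc d → Euc d → ℝ)
    (lam : ℝ) (h u : Euc d → ℝ) : Prop :=
  (∃ C, ∀ x ∈ E, |u x| ≤ C) ∧ UpperSemicontinuousOn u E ∧
  ∀ f : Euc d → ℝ, ContDiff ℝ 2 f → HasCompactSupport f →
    ∀ xn : ℕ → Euc d, (∀ n, xn n ∈ E) →
      Filter.Tendsto (fun n => u (xn n) - f (xn n)) Filter.atTop
        (nhds (sSup ((fun x => u x - f x) '' E))) →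
      Filter.limsup
        (fun n => u (xn n) - lam * HH (xn n) (gradient f (xn n)) - h (xn n))
        Filter.atTop ≤ 0

/-- Viscosity supersolution of `f − λ·H f = h` on `E`. -/
def ViscositySupersolution {d : ℕ} (E : Set (Euc d)) (HH : Euc d → Euc d → ℝ)
    (lam : ℝ) (h v : Euc d → ℝ) : Prop :=
  (∃ C, ∀ x ∈ E, |v x| ≤ C) ∧ LowerSemicontinuousOn v E ∧
  ∀ f : Euc d → ℝ, ContDiff ℝ 2 f → HasCompactSupport f →
    ∀ yn : ℕ → Euc d, (∀ n, yn n ∈ E) →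
      Filter.Tendsto (fun n => v (yn n) - f (yn n)) Filter.atTop
        (nhds (sInf ((fun x => v x - f x) '' E))) →
      0 ≤ Filter.liminf
        (fun n => v (yn n) - lam * HH (yn n) (gradient f (yn n)) - h (yn n))
        Filter.atTop

/- At an optimizing pair `(x, y)` the point `y` minimizes
`v(b) + (1+ε)αΨ(x,b) + εΥ(b)` over `E`, so after localizing with a bump function,
`G(b) = -(1+ε)αΨ(x,b) - εΥ(b)` is a test function for the supersolution property of `v`
at `y`. This bounds `H_‡(y, ∇G(y))` by `(sup|v| + sup|h|)/λ`. By antisymmetry of the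
gradients of `Ψ`, `α∇ₓΨ(x,y)` is the convex combination `(1+ε)⁻¹ ∇G(y) + ε(1+ε)⁻¹ ∇Υ(y)`,
and convexity of the `H_J` together with the bound on `H_J(·, ∇Υ)` finishes the proof. -/

open Topology

section Gradient

variable {F : Type*} [NormedAddCommGroup F] [InnerProductSpace ℝ F] [CompleteSpace F]
  {f g : F → ℝ} {f' g' x : F}

theorem HasGradientAt.add (hf : HasGradientAt f f' x) (hg : HasGradientAt g g' x) :
    HasGradientAt (fun z => f z + g z) (f' + g') x := by
  rw [hasGradientAt_iff_hasFDerivAt, map_add]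
  exact hf.hasFDerivAt.add hg.hasFDerivAt

theorem HasGradientAt.const_mul (c : ℝ) (hf : HasGradientAt f f' x) :
    HasGradientAt (fun z => c * f z) (c • f') x := by
  rw [hasGradientAt_iff_hasFDerivAt, map_smulₛₗ]
  exact hf.hasFDerivAt.const_mul c

theorem gradient_add_const (c : ℝ) : gradient (fun z => f z + c) x = gradient f x := by
  simp only [gradient, fderiv_add_const]

end Gradient

section TestFunction

variable {F : Type*} [NormedAddCommGroup F] [InnerProductSpace ℝ F] [FiniteDimensional ℝ F]

theorem exists_hasCompactSupport_isMinOn_sub {s : Set F} {v G : F → ℝ} {y : F}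
    {n : ℕ∞} (hG : ContDiff ℝ n G)
    (hmin : IsMinOn (fun b => v b - G b) s y) (hv : BddBelow (v '' s)) :
    ∃ f : F → ℝ, ContDiff ℝ n f ∧ HasCompactSupport f ∧ gradient f y = gradient G y ∧
      IsMinOn (fun b => v b - f b) s y := by
  obtain ⟨m, hm⟩ := hv
  have hvm : ∀ b ∈ s, m ≤ v b := fun b hb => hm ⟨b, hb, rfl⟩
  -- `g` is `G` shifted so that `g ≤ v - m` on `s` with equality at `y`; cutting it off by
  -- `χ ∈ [0, 1]` keeps it below `v - m ≥ 0`.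
  set g : F → ℝ := fun b => G b + (v y - m - G y)
  have hg : ∀ b ∈ s, g b ≤ v b - m := fun b hb => by
    have := isMinOn_iff.mp hmin b hb
    simp only [g]
    linarith
  let χ : ContDiffBump y := ⟨1, 2, one_pos, one_lt_two⟩
  refine ⟨fun b => χ b * g b, χ.contDiff.mul (hG.add contDiff_const),
    χ.hasCompactSupport.mul_right, ?_, isMinOn_iff.mpr fun b hb => ?_⟩
  · have hloc : (fun b => χ b * g b) =ᶠ[𝓝 y] g := by
      filter_upwards [χ.eventuallyEq_one] with b hb
      simp [hb]
    rw [hloc.gradient_eq, gradient_add_const]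
  · have hχb : χ b * g b ≤ v b - m := by
      rcases le_total 0 (g b) with hgb | hgb
      · exact (mul_le_of_le_one_left hgb χ.le_one).trans (hg b hb)
      · exact (mul_nonpos_of_nonneg_of_nonpos χ.nonneg hgb).trans (by linarith [hvm b hb])
    simp only [χ.one_of_mem_closedBall (Metric.mem_closedBall_self one_pos.le),
      one_mul, g]
    linarith

end TestFunction

section Supersolution

variable {d : ℕ} {E : Set (Euc d)} {HH : Euc d → Euc d → ℝ} {lam : ℝ} {h v : Euc d → ℝ}
  {y : Euc d}

theorem ViscositySupersolution.mul_le_of_isMinOn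
    (hv : ViscositySupersolution E HH lam h v) {f : Euc d → ℝ} (hf : ContDiff ℝ 2 f)
    (hfc : HasCompactSupport f) (hy : y ∈ E) (hmin : IsMinOn (fun b => v b - f b) E y) :
    lam * HH y (gradient f y) ≤ v y - h y := by
  have hinf : sInf ((fun b => v b - f b) '' E) = v y - f y :=
    IsLeast.csInf_eq ⟨⟨y, hy, rfl⟩, by rintro _ ⟨b, hb, rfl⟩; exact hmin hb⟩
  have := hv.2.2 f hf hfc (fun _ => y) (fun _ => hy) (by rw [hinf]; exact tendsto_const_nhds)
  rw [liminf_const] at this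
  linarith

theorem ViscositySupersolution.mul_le_of_isMinOn_contDiff
    (hv : ViscositySupersolution E HH lam h v) {G : Euc d → ℝ} (hG : ContDiff ℝ 2 G)
    (hy : y ∈ E) (hmin : IsMinOn (fun b => v b - G b) E y) :
    lam * HH y (gradient G y) ≤ v y - h y := by
  obtain ⟨C, hC⟩ := hv.1
  have hbdd : BddBelow (v '' E) :=
    ⟨-C, by rintro _ ⟨b, hb, rfl⟩; exact (abs_le.mp (hC b hb)).1⟩
  obtain ⟨f, hf, hfc, hgrad, hfmin⟩ := exists_hasCompactSupport_isMinOn_sub hG hmin hbdd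
  rw [← hgrad]
  exact hv.mul_le_of_isMinOn hf hfc hy hfmin

end Supersolution

section LowerHamiltonian

variable {d k l : ℕ} {xs vs : Fin k → Euc d} {ys ws : Fin l → Euc d}
  {H : Finset (Fin k) → Euc d → Euc d → ℝ} {x p q : Euc d}

theorem finite_setOf_hamiltonian_values :
    {r : ℝ | ∃ J : Finset (Fin k), x ∈ polyEJ xs vs ys ws J ∧ r = H J x p}.Finite :=
  (Set.finite_range fun J => H J x p).subset fun _ ⟨J, _, hr⟩ => ⟨J, hr.symm⟩

theorem Hddag_le_of_mem_polyEJ {J : Finset (Fin k)} (hx : x ∈ polyEJ xs vs ys ws J) :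
    Hddag xs vs ys ws H x p ≤ H J x p :=
  csInf_le finite_setOf_hamiltonian_values.bddBelow ⟨J, hx, rfl⟩

theorem exists_mem_polyEJ_Hddag_eq (hx : x ∈ polyE xs vs ys ws) :
    ∃ J, x ∈ polyEJ xs vs ys ws J ∧ Hddag xs vs ys ws H x p = H J x p :=
  have hne : {r : ℝ | ∃ J, x ∈ polyEJ xs vs ys ws J ∧ r = H J x p}.Nonempty :=
    ⟨H ∅ x p, ∅, ⟨hx, by simp⟩, rfl⟩
  hne.csInf_mem finite_setOf_hamiltonian_values

theorem Hddag_smul_add_smul_le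
    (hconv : ∀ J, ∀ z ∈ polyEJ xs vs ys ws J, ConvexOn ℝ univ (H J z))
    (hx : x ∈ polyE xs vs ys ws) {C : ℝ} (hq : ∀ J, x ∈ polyEJ xs vs ys ws J → H J x q ≤ C)
    {a b : ℝ} (ha : 0 ≤ a) (hb : 0 ≤ b) (hab : a + b = 1) :
    Hddag xs vs ys ws H x (a • p + b • q) ≤ a * Hddag xs vs ys ws H x p + b * C := by
  obtain ⟨J, hxJ, hJ⟩ := exists_mem_polyEJ_Hddag_eq (H := H) (p := p) hx
  calc Hddag xs vs ys ws H x (a • p + b • q) ≤ H J x (a • p + b • q) := Hddag_le_of_mem_polyEJ hxJ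
    _ ≤ a * H J x p + b * H J x q := (hconv J x hxJ).2 (mem_univ p) (mem_univ q) ha hb hab
    _ ≤ a * Hddag xs vs ys ws H x p + b * C := by rw [hJ]; gcongr; exact hq J hxJ

end LowerHamiltonian

theorem isMinOn_sub_of_doubled_le {ι : Type*} {s : Set ι} {u v Υ : ι → ℝ} {Ψ : ι → ι → ℝ}
    {ε α : ℝ} (hε : 0 < 1 + ε) {x y : ι}
    (hopt : ∀ b ∈ s, u x / (1 - ε) - v b / (1 + ε) - α * Ψ x b -
        (ε / (1 - ε)) * Υ x - (ε / (1 + ε)) * Υ b ≤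
      u x / (1 - ε) - v y / (1 + ε) - α * Ψ x y - (ε / (1 - ε)) * Υ x - (ε / (1 + ε)) * Υ y) :
    IsMinOn (fun b => v b - (-((1 + ε) * α) * Ψ x b + -ε * Υ b)) s y := by
  have hdiv : ∀ b, (v b + (1 + ε) * α * Ψ x b + ε * Υ b) / (1 + ε) =
      v b / (1 + ε) + α * Ψ x b + ε / (1 + ε) * Υ b := fun b => by field_simp
  refine isMinOn_iff.mpr fun b hb => ?_
  have key : (v y + (1 + ε) * α * Ψ x y + ε * Υ y) / (1 + ε) ≤
      (v b + (1 + ε) * α * Ψ x b + ε * Υ b) / (1 + ε) := by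
    rw [hdiv, hdiv]
    linarith [hopt b hb]
  linarith [(div_le_div_iff_of_pos_right hε).mp key]

theorem lower_hamiltonian_bounded_at_optimizers_general {d k l : ℕ}
    (xs vs : Fin k → Euc d) (ys ws : Fin l → Euc d)
    (H : Finset (Fin k) → Euc d → Euc d → ℝ)
    (DpH : Finset (Fin k) → Euc d → Euc d → Euc d)
    (hgen : IsGenerating xs vs ys ws H DpH)
    (Υ : Euc d → ℝ) (hΥ : GoodContainment xs vs ys ws H Υ)
    (Ψ : Euc d → Euc d → ℝ) (hΨ : GoodPenalization (polyE xs vs ys ws) Ψ)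
    (lam : ℝ) (hlam : 0 < lam)
    (h : Euc d → ℝ) (hhb : ∃ C, ∀ x ∈ polyE xs vs ys ws, |h x| ≤ C)
    (u : Euc d → ℝ)
    (v : Euc d → ℝ)
    (hv : ViscositySupersolution (polyE xs vs ys ws) (Hddag xs vs ys ws H) lam h v)
    (X Y : ℝ → ℝ → Euc d)
    (hXY : ∀ ε ∈ Ioo (0:ℝ) 1, ∀ α > (0:ℝ),
      X ε α ∈ polyE xs vs ys ws ∧ Y ε α ∈ polyE xs vs ys ws ∧
      ∀ a ∈ polyE xs vs ys ws, ∀ b ∈ polyE xs vs ys ws,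
        u a / (1 - ε) - v b / (1 + ε) - α * Ψ a b -
            (ε / (1 - ε)) * Υ a - (ε / (1 + ε)) * Υ b ≤
          u (X ε α) / (1 - ε) - v (Y ε α) / (1 + ε) - α * Ψ (X ε α) (Y ε α) -
            (ε / (1 - ε)) * Υ (X ε α) - (ε / (1 + ε)) * Υ (Y ε α)) :
    ∃ C : ℝ, ∀ ε ∈ Ioo (0:ℝ) 1, ∀ α > (0:ℝ),
      Hddag xs vs ys ws H (Y ε α)
        (α • gradient (fun x' => Ψ x' (Y ε α)) (X ε α)) ≤ C := by
  obtain ⟨Cv, hCv⟩ := hv.1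
  obtain ⟨Ch, hCh⟩ := hhb
  obtain ⟨CΥ, hCΥ⟩ := hΥ.2.2.2.2
  refine ⟨max ((Cv + Ch) / lam) CΥ, fun ε hε α hα => ?_⟩
  obtain ⟨hx, hy, hopt⟩ := hXY ε hε α hα
  set x := X ε α
  set y := Y ε α
  have h1ε : 0 < 1 + ε := by linarith [hε.1]
  have hεdiv : 0 ≤ ε / (1 + ε) := div_nonneg hε.1.le h1ε.le
  have hΥ2 : ContDiff ℝ 2 Υ := hΥ.2.2.1
  have hΨx : ContDiff ℝ 2 (fun b => Ψ x b) := hΨ.2.2.1.comp (contDiff_const.prodMk contDiff_id)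
  set G : Euc d → ℝ := fun b => -((1 + ε) * α) * Ψ x b + -ε * Υ b
  have hHG : Hddag xs vs ys ws H y (gradient G y) ≤ (Cv + Ch) / lam := by
    have := hv.mul_le_of_isMinOn_contDiff
      ((contDiff_const.mul hΨx).add (contDiff_const.mul hΥ2)) hy
      (isMinOn_sub_of_doubled_le h1ε (hopt x hx))
    rw [le_div_iff₀ hlam]
    linarith [abs_le.mp (hCv y hy), abs_le.mp (hCh y hy)]
  have hgradG : gradient G y =
      -((1 + ε) * α) • gradient (fun b => Ψ x b) y + -ε • gradient Υ y :=
    (((hΨx.differentiable two_ne_zero).differentiableAt.hasGradientAt.const_mul _).add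
      ((hΥ2.differentiable two_ne_zero).differentiableAt.hasGradientAt.const_mul _)).gradient
  have hp : α • gradient (fun x' => Ψ x' y) x =
      (1 + ε)⁻¹ • gradient G y + (ε / (1 + ε)) • gradient Υ y := by
    rw [hgradG, hΨ.2.2.2 x y]
    match_scalars
    · field_simp
    · field_simp
      ring
  rw [hp]
  calc _ ≤ (1 + ε)⁻¹ * Hddag xs vs ys ws H y (gradient G y) + ε / (1 + ε) * CΥ :=
        Hddag_smul_add_smul_le (fun J => (hgen J).1) hy (fun J hJ => hCΥ J y hJ)
          (by positivity) hεdiv (by field_simp)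
    _ ≤ (1 + ε)⁻¹ * max ((Cv + Ch) / lam) CΥ + ε / (1 + ε) * max ((Cv + Ch) / lam) CΥ := by
        gcongr
        exacts [hHG.trans (le_max_left _ _), le_max_right _ _]
    _ = max ((Cv + Ch) / lam) CΥ := by field_simp

/-- Uniform control of the lower Hamiltonian at optimizing points (Lemma 4.9): given a
generating set of Hamiltonians with good containment function `Υ` and good penalization
function `Ψ`, a bounded usc `u`, a viscosity supersolution `v` of `f − λH_‡ f = h`, and
a family `(X ε α, Y ε α)` of maximizers of the doubled objective, the quantities
`H_‡(y_{α,ε}, α∇_xΨ(x_{α,ε},y_{α,ε}))` are bounded above uniformly in `ε ∈ (0,1)` and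
`α > 0`. -/
theorem lower_hamiltonian_bounded_at_optimizers {d k l : ℕ}
    (xs vs : Fin k → Euc d) (ys ws : Fin l → Euc d)
    (hpoly : IsPolyhedron xs vs ys ws)
    (H : Finset (Fin k) → Euc d → Euc d → ℝ)
    (DpH : Finset (Fin k) → Euc d → Euc d → Euc d)
    (hgen : IsGenerating xs vs ys ws H DpH)
    (Υ : Euc d → ℝ) (hΥ : GoodContainment xs vs ys ws H Υ)
    (Ψ : Euc d → Euc d → ℝ) (hΨ : GoodPenalization (polyE xs vs ys ws) Ψ)
    (lam : ℝ) (hlam : 0 < lam)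
    (h : Euc d → ℝ) (hhb : ∃ C, ∀ x ∈ polyE xs vs ys ws, |h x| ≤ C)
    (hhc : ContinuousOn h (polyE xs vs ys ws))
    (u : Euc d → ℝ) (hub : ∃ C, ∀ x ∈ polyE xs vs ys ws, |u x| ≤ C)
    (husc : UpperSemicontinuousOn u (polyE xs vs ys ws))
    (v : Euc d → ℝ)
    (hv : ViscositySupersolution (polyE xs vs ys ws) (Hddag xs vs ys ws H) lam h v)
    (X Y : ℝ → ℝ → Euc d)
    (hXY : ∀ ε ∈ Ioo (0:ℝ) 1, ∀ α > (0:ℝ),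
      X ε α ∈ polyE xs vs ys ws ∧ Y ε α ∈ polyE xs vs ys ws ∧
      ∀ a ∈ polyE xs vs ys ws, ∀ b ∈ polyE xs vs ys ws,
        u a / (1 - ε) - v b / (1 + ε) - α * Ψ a b -
            (ε / (1 - ε)) * Υ a - (ε / (1 + ε)) * Υ b ≤
          u (X ε α) / (1 - ε) - v (Y ε α) / (1 + ε) - α * Ψ (X ε α) (Y ε α) -
            (ε / (1 - ε)) * Υ (X ε α) - (ε / (1 + ε)) * Υ (Y ε α)) :
    ∃ C : ℝ, ∀ ε ∈ Ioo (0:ℝ) 1, ∀ α > (0:ℝ),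
      Hddag xs vs ys ws H (Y ε α)
        (α • gradient (fun x' => Ψ x' (Y ε α)) (X ε α)) ≤ C :=
  lower_hamiltonian_bounded_at_optimizers_general xs vs ys ws H DpH hgen Υ hΥ Ψ hΨ lam hlam h hhb u
    v hv X Y hXY
end
end

section
/- Lower semicontinuity and compact sublevel sets of the Lagrangian (Proposition 4.15(a)): Let E be a d-dimensional convex polyhedron, {H_J} a generating set of Hamiltonians admitting a good containment function Υ, and L(x,v) = sup_{p∈ℝ^d}(⟨p,v⟩ − H_†(x,p)). Then L : E × ℝ^d → [0,∞] is lower semicontinuous, and for every compact set K ⊆ E and every c ∈ ℝ the set {(x,v) ∈ K × ℝ^d : L(x,v) ≤ c} is compact in E × ℝ^d. -/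
open Filter Set
open scoped ENNReal

noncomputable section

open Topology
open scoped InnerProductSpace

/-!
Fix `p`. Near a point `x ∈ E` only constraints active at `x` can be active, so every face `E_J`
through a nearby point also contains `x`. Hence `x ↦ H_†(x,p)` is upper semicontinuous on `E`,
being near `x` a maximum of continuous functions over faces through `x`, and `L` is a supremum
of lower semicontinuous functions of `(x,v)`. On a compact `K ⊆ E` each `H_†(·,p)` is bounded
above, so `L(x,v) ≤ c` bounds `⟪p,v⟫` from above for every `p`, which bounds `v` (test `p`
against `±` an orthonormal basis). The sublevel set is then a sublevel set of `L` on a compact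
box.
-/

section ActiveMax

variable {ι α : Type*}

/-- `sSup ∅ = 0` when no piece is active at `x`. -/
def activeMax (t : ι → Set α) (f : ι → α → ℝ) (x : α) : ℝ :=
  sSup {r | ∃ i, x ∈ t i ∧ r = f i x}

variable [Finite ι] {t : ι → Set α} {f : ι → α → ℝ} {x : α}

theorem finite_activeValues (t : ι → Set α) (f : ι → α → ℝ) (x : α) :
    {r | ∃ i, x ∈ t i ∧ r = f i x}.Finite :=
  (Set.finite_range fun j => f j x).subset <| by rintro r ⟨j, -, rfl⟩; exact ⟨j, rfl⟩

theorem le_activeMax {i : ι} (hi : x ∈ t i) : f i x ≤ activeMax t f x :=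
  le_csSup (finite_activeValues t f x).bddAbove ⟨i, hi, rfl⟩

theorem exists_activeMax_eq (hx : ∃ i, x ∈ t i) :
    ∃ i, x ∈ t i ∧ activeMax t f x = f i x := by
  obtain ⟨i, hi⟩ := hx
  have hne : {r | ∃ i, x ∈ t i ∧ r = f i x}.Nonempty := ⟨f i x, i, hi, rfl⟩
  exact hne.csSup_mem (finite_activeValues t f x)

theorem upperSemicontinuousOn_activeMax [TopologicalSpace α] {s : Set α} {C : ι → Set α}
    (hC : ∀ i, IsClosed (C i)) (hf : ∀ i, ContinuousOn (f i) (s ∩ C i))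
    (hcover : ∀ x ∈ s, ∃ i, x ∈ C i) :
    UpperSemicontinuousOn (activeMax (fun i => s ∩ C i) f) s := by
  intro x hx y hy
  have near : ∀ i, ∀ᶠ z in 𝓝[s] x, z ∈ C i → f i z < y := by
    intro i
    by_cases hxi : x ∈ C i
    · have hlt : f i x < y := (le_activeMax (t := fun i => s ∩ C i) ⟨hx, hxi⟩).trans_lt hy
      have := (hf i x ⟨hx, hxi⟩).eventually (eventually_lt_nhds hlt)
      rw [nhdsWithin_inter'] at this
      exact eventually_inf_principal.1 this
    · exact eventually_nhdsWithin_of_eventually_nhds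
        (((hC i).isOpen_compl.eventually_mem hxi).mono fun z hz hz' => absurd hz' hz)
  filter_upwards [eventually_all.2 near, self_mem_nhdsWithin] with z hz hzs
  obtain ⟨i, ⟨-, hzi⟩, heq⟩ := exists_activeMax_eq (t := fun i => s ∩ C i) (f := f)
    (hcover z hzs |>.imp fun i h => ⟨hzs, h⟩)
  exact heq ▸ hz i hzi

end ActiveMax

theorem isBounded_of_bddAbove_inner {F : Type*} [NormedAddCommGroup F] [InnerProductSpace ℝ F]
    [FiniteDimensional ℝ F] {T : Set F} (hT : ∀ p, BddAbove ((fun v => ⟪p, v⟫_ℝ) '' T)) :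
    Bornology.IsBounded T := by
  let b := stdOrthonormalBasis ℝ F
  have hcoord : ∀ i, ∃ B, ∀ v ∈ T, |⟪b i, v⟫_ℝ| ≤ B := by
    intro i
    obtain ⟨B₁, hB₁⟩ := hT (b i)
    obtain ⟨B₂, hB₂⟩ := hT (-b i)
    refine ⟨max B₁ B₂, fun v hv => abs_le.2 ⟨?_, ?_⟩⟩
    · have := hB₂ ⟨v, hv, rfl⟩
      simp only [inner_neg_left] at this
      linarith [le_max_right B₁ B₂]
    · exact (hB₁ ⟨v, hv, rfl⟩).trans (le_max_left B₁ B₂)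
  choose B hB using hcoord
  refine isBounded_iff_forall_norm_le.2 ⟨∑ i, B i, fun v hv => ?_⟩
  calc ‖v‖ = ‖∑ i, ⟪b i, v⟫_ℝ • b i‖ := by rw [b.sum_repr']
    _ ≤ ∑ i, ‖⟪b i, v⟫_ℝ • b i‖ := norm_sum_le _ _
    _ = ∑ i, |⟪b i, v⟫_ℝ| := by simp [norm_smul, b.orthonormal.1]
    _ ≤ ∑ i, B i := Finset.sum_le_sum fun i _ => hB i v hv

section Polyhedron

variable {d k l : ℕ} {xs vs : Fin k → Euc d} {ys ws : Fin l → Euc d}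
  {H : Finset (Fin k) → Euc d → Euc d → ℝ}

theorem isClosed_setOf_forall_inner_eq (J : Finset (Fin k)) :
    IsClosed {z : Euc d | ∀ i ∈ J, (inner ℝ (z - xs i) (vs i) : ℝ) = 0} := by
  simp only [ofPred_forall]
  exact isClosed_biInter fun i _ => isClosed_eq (by fun_prop) continuous_const

theorem polyEJ_eq_inter (J : Finset (Fin k)) :
    polyEJ xs vs ys ws J =
      polyE xs vs ys ws ∩ {z | ∀ i ∈ J, (inner ℝ (z - xs i) (vs i) : ℝ) = 0} := rfl

theorem hdag_eq_activeMax (p : Euc d) :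
    (fun x => Hdag xs vs ys ws H x p) = activeMax (polyEJ xs vs ys ws) (fun J z => H J z p) :=
  rfl

theorem upperSemicontinuousOn_hdag
    (hH : ∀ J, ContinuousOn (fun q : Euc d × Euc d => H J q.1 q.2)
      (polyEJ xs vs ys ws J ×ˢ univ))
    (p : Euc d) :
    UpperSemicontinuousOn (fun x => Hdag xs vs ys ws H x p) (polyE xs vs ys ws) := by
  rw [hdag_eq_activeMax, funext polyEJ_eq_inter]
  refine upperSemicontinuousOn_activeMax isClosed_setOf_forall_inner_eq (fun J => ?_)
    fun _ _ => ⟨∅, fun _ hi => absurd hi (Finset.notMem_empty _)⟩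
  rw [← polyEJ_eq_inter]
  have hsec : ContinuousOn (fun z : Euc d => (z, p)) (polyEJ xs vs ys ws J) :=
    (continuous_id.prodMk continuous_const).continuousOn
  exact (hH J).comp hsec fun _ hz => ⟨hz, mem_univ p⟩

theorem lowerSemicontinuousOn_lag
    (hH : ∀ J, ContinuousOn (fun q : Euc d × Euc d => H J q.1 q.2)
      (polyEJ xs vs ys ws J ×ˢ univ)) :
    LowerSemicontinuousOn (fun q : Euc d × Euc d => Lag xs vs ys ws H q.1 q.2)
      (polyE xs vs ys ws ×ˢ univ) := by
  refine lowerSemicontinuousOn_iSup fun p => ?_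
  have hdag : UpperSemicontinuousOn (fun q : Euc d × Euc d => Hdag xs vs ys ws H q.1 p)
      (polyE xs vs ys ws ×ˢ univ) :=
    (upperSemicontinuousOn_hdag hH p).comp continuousOn_fst fun _ hq => hq.1
  have hinner : LowerSemicontinuousOn (fun q : Euc d × Euc d => ⟪p, q.2⟫_ℝ)
      (polyE xs vs ys ws ×ˢ univ) :=
    (continuous_const.inner continuous_snd).lowerSemicontinuous.lowerSemicontinuousOn _
  have hsub := hinner.add
    (continuous_neg.comp_upperSemicontinuousOn_antitone hdag fun _ _ => neg_le_neg)
  simp only [Function.comp_def, ← sub_eq_add_neg] at hsub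
  exact ENNReal.continuous_ofReal.comp_lowerSemicontinuousOn hsub ENNReal.ofReal_mono

theorem inner_sub_hdag_le_of_lag_le {x v : Euc d} {c : ℝ}
    (h : Lag xs vs ys ws H x v ≤ ENNReal.ofReal c) (p : Euc d) :
    ⟪p, v⟫_ℝ - Hdag xs vs ys ws H x p ≤ max c 0 := by
  have := (le_iSup (fun p => ENNReal.ofReal (⟪p, v⟫_ℝ - Hdag xs vs ys ws H x p)) p).trans h
  rcases ENNReal.ofReal_le_ofReal_iff'.1 this with h | h
  · exact h.trans (le_max_left c 0)
  · exact h.trans (le_max_right c 0)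

theorem isBounded_lag_sublevel
    (hH : ∀ J, ContinuousOn (fun q : Euc d × Euc d => H J q.1 q.2)
      (polyEJ xs vs ys ws J ×ˢ univ))
    {K : Set (Euc d)} (hKE : K ⊆ polyE xs vs ys ws) (hK : IsCompact K) (c : ℝ) :
    Bornology.IsBounded (Prod.snd '' {q : Euc d × Euc d |
      q.1 ∈ K ∧ Lag xs vs ys ws H q.1 q.2 ≤ ENNReal.ofReal c}) := by
  refine isBounded_of_bddAbove_inner fun p => ?_
  obtain ⟨M, hM⟩ := ((upperSemicontinuousOn_hdag hH p).mono hKE).bddAbove_of_isCompact hK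
  refine ⟨max c 0 + M, ?_⟩
  rintro _ ⟨_, ⟨q, ⟨hqK, hqc⟩, rfl⟩, rfl⟩
  have := inner_sub_hdag_le_of_lag_le hqc p
  have := hM ⟨q.1, hqK, rfl⟩
  linarith

end Polyhedron

theorem lag_lsc_and_compact_sublevels_general {d k l : ℕ}
    (xs vs : Fin k → Euc d) (ys ws : Fin l → Euc d)
    (H : Finset (Fin k) → Euc d → Euc d → ℝ)
    (DpH : Finset (Fin k) → Euc d → Euc d → Euc d)
    (hgen : IsGenerating xs vs ys ws H DpH) :
    LowerSemicontinuousOn (fun q : Euc d × Euc d => Lag xs vs ys ws H q.1 q.2)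
      (polyE xs vs ys ws ×ˢ univ) ∧
    ∀ K ⊆ polyE xs vs ys ws, IsCompact K → ∀ c : ℝ,
      IsCompact {q : Euc d × Euc d |
        q.1 ∈ K ∧ Lag xs vs ys ws H q.1 q.2 ≤ ENNReal.ofReal c} := by
  have hH : ∀ J, ContinuousOn (fun q : Euc d × Euc d => H J q.1 q.2)
      (polyEJ xs vs ys ws J ×ˢ univ) := fun J => (hgen J).2.1.continuousOn
  refine ⟨lowerSemicontinuousOn_lag hH, fun K hKE hK c => ?_⟩
  obtain ⟨R, hR⟩ := isBounded_iff_forall_norm_le.1 (isBounded_lag_sublevel hH hKE hK c)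
  have hbox : IsCompact (K ×ˢ Metric.closedBall (0 : Euc d) R) :=
    hK.prod (isCompact_closedBall 0 R)
  convert ((lowerSemicontinuousOn_lag hH).mono (prod_mono hKE (subset_univ _))
    |>.isCompact_inter_preimage_Iic hbox (ENNReal.ofReal c)) using 1
  ext q
  refine ⟨fun hq => ⟨⟨hq.1, ?_⟩, hq.2⟩, fun hq => ⟨hq.1.1, hq.2⟩⟩
  simpa using hR q.2 ⟨q, hq, rfl⟩

/-- Lower semicontinuity and compact sublevel sets of the Lagrangian
(Proposition 4.15(a)): `L` is lower semicontinuous on `E × ℝ^d`, and for every compact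
`K ⊆ E` and every `c ∈ ℝ` the set `{(x,v) ∈ K × ℝ^d : L(x,v) ≤ c}` is compact. -/
theorem lag_lsc_and_compact_sublevels {d k l : ℕ}
    (xs vs : Fin k → Euc d) (ys ws : Fin l → Euc d)
    (hpoly : IsPolyhedron xs vs ys ws)
    (H : Finset (Fin k) → Euc d → Euc d → ℝ)
    (DpH : Finset (Fin k) → Euc d → Euc d → Euc d)
    (hgen : IsGenerating xs vs ys ws H DpH)
    (Υ : Euc d → ℝ) (hΥ : GoodContainment xs vs ys ws H Υ) :
    LowerSemicontinuousOn (fun q : Euc d × Euc d => Lag xs vs ys ws H q.1 q.2)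
      (polyE xs vs ys ws ×ˢ univ) ∧
    ∀ K ⊆ polyE xs vs ys ws, IsCompact K → ∀ c : ℝ,
      IsCompact {q : Euc d × Euc d |
        q.1 ∈ K ∧ Lag xs vs ys ws H q.1 q.2 ≤ ENNReal.ofReal c} :=
  lag_lsc_and_compact_sublevels_general xs vs ys ws H DpH hgen
end
end

section
/- Compact containment of trajectories with bounded Lagrangian cost (Proposition 4.15(b)): Let E be a d-dimensional convex polyhedron, {H_J} a generating set of Hamiltonians admitting a good containment function Υ, and L(x,v) = sup_{p∈ℝ^d}(⟨p,v⟩ − H_†(x,p)). Then for every compact K ⊆ E, every T > 0 and every M ≥ 0 there exists a compact set K' = K'(K,T,M) ⊆ E such that every absolutely continuous curve γ : [0,T] → E with γ(0) ∈ K and ∫₀ᵀ L(γ(s), γ̇(s)) ds ≤ M satisfies γ(t) ∈ K' for all 0 ≤ t ≤ T. -/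
open Filter Set
open scoped ENNReal

noncomputable section

open MeasureTheory

/-! Along the curve, `d/dt Υ(γ) = ⟪∇Υ(γ), γ̇⟫ ≤ H_†(γ, ∇Υ(γ)) + L(γ, γ̇) ≤ C + L(γ, γ̇)` by the
Fenchel–Young inequality, where `C` bounds `H_J(·, ∇Υ)` on the faces `E_J`. Integrating gives
`Υ(γ t) ≤ Υ(γ 0) + C T + M`, so `γ` stays in a sublevel set of `Υ`, which is compact.
The chain rule for `Υ ∘ γ` with `γ` merely absolutely continuous follows from the fundamental theorem
of calculus for absolutely continuous functions, since `Υ` is Lipschitz on the compact image of `γ`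
and hence `Υ ∘ γ` is absolutely continuous. -/

open intervalIntegral

theorem AbsolutelyContinuousOnInterval.of_dist_le_mul {X Y : Type*} [PseudoMetricSpace X]
    [PseudoMetricSpace Y] {f : ℝ → X} {φ : ℝ → Y} {a b C : ℝ}
    (hφ : AbsolutelyContinuousOnInterval φ a b)
    (h : ∀ x ∈ uIcc a b, ∀ y ∈ uIcc a b, dist (f x) (f y) ≤ C * dist (φ x) (φ y)) :
    AbsolutelyContinuousOnInterval f a b := by
  have hCφ := (show Tendsto _ _ _ from hφ).const_mul C
  rw [mul_zero] at hCφ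
  refine squeeze_zero' (Eventually.of_forall fun _ ↦ Finset.sum_nonneg fun _ _ ↦ dist_nonneg)
    ?_ hCφ
  refine eventually_inf_principal.mpr (Eventually.of_forall fun E hE ↦ ?_)
  rw [Finset.mul_sum]
  exact Finset.sum_le_sum fun i hi ↦ h _ (hE.1 i hi).1 _ (hE.1 i hi).2

theorem LipschitzOnWith.comp_absolutelyContinuousOnInterval {X Y : Type*} [PseudoMetricSpace X]
    [PseudoMetricSpace Y] {f : X → Y} {γ : ℝ → X} {K : NNReal} {s : Set X} {a b : ℝ}
    (hf : LipschitzOnWith K f s) (hγ : AbsolutelyContinuousOnInterval γ a b)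
    (hγs : MapsTo γ (uIcc a b) s) : AbsolutelyContinuousOnInterval (f ∘ γ) a b :=
  hγ.of_dist_le_mul fun _ hx _ hy ↦ hf.dist_le_mul _ (hγs hx) _ (hγs hy)

theorem IntervalIntegrable.absolutelyContinuousOnInterval_const_add_intervalIntegral
    {E : Type*} [NormedAddCommGroup E] [NormedSpace ℝ E] {g : ℝ → E} {a b : ℝ}
    (hg : IntervalIntegrable g volume a b) (x₀ : E) :
    AbsolutelyContinuousOnInterval (fun t ↦ x₀ + ∫ s in a..t, g s) a b := by
  refine (hg.norm.absolutelyContinuousOnInterval_intervalIntegral left_mem_uIcc).of_dist_le_mul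
    (C := 1) fun x hx y hy ↦ ?_
  have hax := hg.mono_set (uIcc_subset_uIcc left_mem_uIcc hx)
  have hay := hg.mono_set (uIcc_subset_uIcc left_mem_uIcc hy)
  rw [one_mul, dist_add_left, dist_eq_norm, dist_eq_norm, Real.norm_eq_abs,
    integral_interval_sub_left hax hay, integral_interval_sub_left hax.norm hay.norm]
  exact norm_integral_le_abs_integral_norm

section ChainRule

variable {E : Type*} [NormedAddCommGroup E] [NormedSpace ℝ E]
  {f : E → ℝ} {g : ℝ → E} {a b : ℝ}

theorem ContDiff.absolutelyContinuousOnInterval_comp_const_add_intervalIntegral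
    (hf : ContDiff ℝ 1 f) (hg : IntervalIntegrable g volume a b) (x₀ : E) :
    AbsolutelyContinuousOnInterval (fun t ↦ f (x₀ + ∫ s in a..t, g s)) a b := by
  have hγ := hg.absolutelyContinuousOnInterval_const_add_intervalIntegral x₀
  obtain ⟨K, hK⟩ := (hf.locallyLipschitz.locallyLipschitzOn).exists_lipschitzOnWith_of_compact
    (isCompact_uIcc.image_of_continuousOn hγ.continuousOn)
  exact hK.comp_absolutelyContinuousOnInterval hγ (mapsTo_image _ _)

variable [CompleteSpace E]

theorem ContDiff.ae_hasDerivAt_comp_const_add_intervalIntegral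
    (hf : ContDiff ℝ 1 f) (hg : IntervalIntegrable g volume a b) (x₀ : E) :
    ∀ᵐ t, t ∈ uIcc a b → HasDerivAt (fun t ↦ f (x₀ + ∫ s in a..t, g s))
      (fderiv ℝ f (x₀ + ∫ s in a..t, g s) (g t)) t := by
  filter_upwards [hg.ae_hasDerivAt_integral] with t ht htab
  exact (hf.differentiable one_ne_zero _).hasFDerivAt.comp_hasDerivAt t
    ((ht htab a left_mem_uIcc).const_add x₀)

theorem ContDiff.intervalIntegrable_fderiv_comp_const_add_intervalIntegral
    (hf : ContDiff ℝ 1 f) (hg : IntervalIntegrable g volume a b) (x₀ : E) :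
    IntervalIntegrable (fun t ↦ fderiv ℝ f (x₀ + ∫ s in a..t, g s) (g t)) volume a b := by
  refine (hf.absolutelyContinuousOnInterval_comp_const_add_intervalIntegral hg x₀
    |>.intervalIntegrable_deriv).congr_ae ?_
  filter_upwards [ae_restrict_mem measurableSet_uIoc,
    ae_restrict_of_ae (hf.ae_hasDerivAt_comp_const_add_intervalIntegral hg x₀)] with t htab ht
  exact (ht (uIoc_subset_uIcc htab)).deriv

theorem ContDiff.integral_fderiv_comp_const_add_intervalIntegral
    (hf : ContDiff ℝ 1 f) (hg : IntervalIntegrable g volume a b) (x₀ : E) :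
    ∫ t in a..b, fderiv ℝ f (x₀ + ∫ s in a..t, g s) (g t) = f (x₀ + ∫ s in a..b, g s) - f x₀ := by
  calc ∫ t in a..b, fderiv ℝ f (x₀ + ∫ s in a..t, g s) (g t)
      = ∫ t in a..b, deriv (fun t ↦ f (x₀ + ∫ s in a..t, g s)) t := by
        refine integral_congr_ae ?_
        filter_upwards [hf.ae_hasDerivAt_comp_const_add_intervalIntegral hg x₀] with t ht htab
        exact (ht (uIoc_subset_uIcc htab)).deriv.symm
    _ = f (x₀ + ∫ s in a..b, g s) - f x₀ := by
        rw [(hf.absolutelyContinuousOnInterval_comp_const_add_intervalIntegral hg x₀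
          ).integral_deriv_eq_sub, integral_same, add_zero]

end ChainRule

theorem MeasureTheory.integral_le_of_lintegral_ofReal_le {α : Type*} [MeasurableSpace α]
    {μ : Measure α} {u : α → ℝ} {M : ℝ} (hM : 0 ≤ M)
    (h : ∫⁻ x, ENNReal.ofReal (u x) ∂μ ≤ ENNReal.ofReal M) : ∫ x, u x ∂μ ≤ M := by
  by_cases hu : Integrable u μ
  · rw [integral_eq_lintegral_pos_part_sub_lintegral_neg_part hu]
    calc _ ≤ (∫⁻ x, ENNReal.ofReal (u x) ∂μ).toReal := sub_le_self _ ENNReal.toReal_nonneg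
      _ ≤ M := ENNReal.toReal_le_of_le_ofReal hM h
  · rw [integral_undef hu]
    exact hM

section Lagrangian

variable {d k l : ℕ} {xs vs : Fin k → Euc d} {ys ws : Fin l → Euc d}
  {H : Finset (Fin k) → Euc d → Euc d → ℝ}

theorem Hdag_le_of_forall_le {x p : Euc d} {C : ℝ} (hx : x ∈ polyE xs vs ys ws)
    (hC : ∀ J, x ∈ polyEJ xs vs ys ws J → H J x p ≤ C) : Hdag xs vs ys ws H x p ≤ C :=
  csSup_le ⟨H ∅ x p, ∅, ⟨hx, by simp⟩, rfl⟩ (by rintro r ⟨J, hJ, rfl⟩; exact hC J hJ)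

theorem ofReal_inner_sub_le_Lag {x p v : Euc d} {C : ℝ} (h : Hdag xs vs ys ws H x p ≤ C) :
    ENNReal.ofReal (inner ℝ p v - C) ≤ Lag xs vs ys ws H x v :=
  (ENNReal.ofReal_le_ofReal (by linarith)).trans
    (le_iSup (fun p ↦ ENNReal.ofReal (inner ℝ p v - Hdag xs vs ys ws H x p)) p)

theorem le_add_mul_add_of_lintegral_Lag_le {Υ : Euc d → ℝ} (hΥ : ContDiff ℝ 1 Υ) {C : ℝ}
    (hC : ∀ J, ∀ z ∈ polyEJ xs vs ys ws J, H J z (gradient Υ z) ≤ C)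
    {T M t : ℝ} (hM : 0 ≤ M) (ht : t ∈ Icc 0 T) {γ g : ℝ → Euc d}
    (hγE : ∀ s ∈ Icc 0 T, γ s ∈ polyE xs vs ys ws) (hg : IntegrableOn g (Icc 0 T))
    (hγ : ∀ s ∈ Icc 0 T, γ s = γ 0 + ∫ r in 0..s, g r)
    (hcost : ∫⁻ s in Icc 0 T, Lag xs vs ys ws H (γ s) (g s) ≤ ENNReal.ofReal M) :
    Υ (γ t) ≤ Υ (γ 0) + C * t + M := by
  have hsub : Icc 0 t ⊆ Icc 0 T := Icc_subset_Icc_right ht.2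
  have hgt : IntervalIntegrable g volume 0 t :=
    (intervalIntegrable_iff_integrableOn_Icc_of_le ht.1).2 (hg.mono_set hsub)
  set u := fun s ↦ fderiv ℝ Υ (γ 0 + ∫ r in 0..s, g r) (g s)
  have hchain : Υ (γ t) - Υ (γ 0) = ∫ s in 0..t, u s := by
    rw [hΥ.integral_fderiv_comp_const_add_intervalIntegral hgt, ← hγ t ht]
  have hcost_t : ∫ s in 0..t, (u s - C) ≤ M := by
    rw [integral_of_le ht.1]
    refine integral_le_of_lintegral_ofReal_le hM ?_
    calc ∫⁻ s in Ioc 0 t, ENNReal.ofReal (u s - C)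
        ≤ ∫⁻ s in Ioc 0 t, Lag xs vs ys ws H (γ s) (g s) := by
          refine setLIntegral_mono' measurableSet_Ioc fun s hs ↦ ?_
          have hsT := hsub (Ioc_subset_Icc_self hs)
          rw [show u s = inner ℝ (gradient Υ (γ s)) (g s) by
            rw [hγ s hsT, gradient, InnerProductSpace.toDual_symm_apply]]
          exact ofReal_inner_sub_le_Lag (Hdag_le_of_forall_le (hγE s hsT) fun J hJ ↦ hC J _ hJ)
      _ ≤ ∫⁻ s in Icc 0 T, Lag xs vs ys ws H (γ s) (g s) :=
          lintegral_mono_set (Ioc_subset_Icc_self.trans hsub)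
      _ ≤ ENNReal.ofReal M := hcost
  rw [integral_sub (hΥ.intervalIntegrable_fderiv_comp_const_add_intervalIntegral hgt _)
    intervalIntegrable_const, intervalIntegral.integral_const, smul_eq_mul] at hcost_t
  linarith

end Lagrangian

theorem compact_containment_of_bounded_cost_general {d k l : ℕ}
    (xs vs : Fin k → Euc d) (ys ws : Fin l → Euc d)
    (H : Finset (Fin k) → Euc d → Euc d → ℝ)
    (Υ : Euc d → ℝ) (hΥ : GoodContainment xs vs ys ws H Υ) :
    ∀ K ⊆ polyE xs vs ys ws, IsCompact K → ∀ T : ℝ, 0 < T → ∀ M : ℝ, 0 ≤ M →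
      ∃ K' : Set (Euc d), IsCompact K' ∧ K' ⊆ polyE xs vs ys ws ∧
        ∀ γ g : ℝ → Euc d,
          (∀ t ∈ Icc (0:ℝ) T, γ t ∈ polyE xs vs ys ws) →
          γ 0 ∈ K →
          IntegrableOn g (Icc 0 T) volume →
          (∀ t ∈ Icc (0:ℝ) T, γ t = γ 0 + ∫ s in (0:ℝ)..t, g s) →
          (∫⁻ s in Icc (0:ℝ) T, Lag xs vs ys ws H (γ s) (g s)) ≤ ENNReal.ofReal M →
          ∀ t ∈ Icc (0:ℝ) T, γ t ∈ K' := by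
  intro K _ hK T hT M hM
  obtain ⟨-, -, hΥ₂, hsublevel, C, hC⟩ := hΥ
  obtain ⟨R, hR⟩ := hK.bddAbove_image hΥ₂.continuous.continuousOn
  have hc : 0 ≤ max R 0 + max C 0 * T + M :=
    add_nonneg (add_nonneg (le_max_right _ _) (mul_nonneg (le_max_right _ _) hT.le)) hM
  refine ⟨_, hsublevel _ hc, sep_subset _ _, fun γ g hγE hγ₀ hg hγ hcost t ht ↦ ⟨hγE t ht, ?_⟩⟩
  calc Υ (γ t) ≤ Υ (γ 0) + C * t + M :=
        le_add_mul_add_of_lintegral_Lag_le (hΥ₂.of_le one_le_two) hC hM ht hγE hg hγ hcost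
    _ ≤ max R 0 + max C 0 * T + M := by
        have hR₀ : Υ (γ 0) ≤ max R 0 := (hR (mem_image_of_mem Υ hγ₀)).trans (le_max_left _ _)
        have hCt : C * t ≤ max C 0 * T := mul_le_mul (le_max_left _ _) ht.2 ht.1 (le_max_right _ _)
        linarith

/-- Compact containment of trajectories with bounded Lagrangian cost
(Proposition 4.15(b)): for every compact `K ⊆ E`, `T > 0` and `M ≥ 0` there is a compact
`K' ⊆ E` such that every absolutely continuous curve `γ : [0,T] → E` with `γ(0) ∈ K`
and `∫₀ᵀ L(γ(s),γ̇(s)) ds ≤ M` stays in `K'`. -/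
theorem compact_containment_of_bounded_cost {d k l : ℕ}
    (xs vs : Fin k → Euc d) (ys ws : Fin l → Euc d)
    (hpoly : IsPolyhedron xs vs ys ws)
    (H : Finset (Fin k) → Euc d → Euc d → ℝ)
    (DpH : Finset (Fin k) → Euc d → Euc d → Euc d)
    (hgen : IsGenerating xs vs ys ws H DpH)
    (Υ : Euc d → ℝ) (hΥ : GoodContainment xs vs ys ws H Υ) :
    ∀ K ⊆ polyE xs vs ys ws, IsCompact K → ∀ T : ℝ, 0 < T → ∀ M : ℝ, 0 ≤ M →
      ∃ K' : Set (Euc d), IsCompact K' ∧ K' ⊆ polyE xs vs ys ws ∧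
        ∀ γ g : ℝ → Euc d,
          (∀ t ∈ Icc (0:ℝ) T, γ t ∈ polyE xs vs ys ws) →
          γ 0 ∈ K →
          IntegrableOn g (Icc 0 T) volume →
          (∀ t ∈ Icc (0:ℝ) T, γ t = γ 0 + ∫ s in (0:ℝ)..t, g s) →
          (∫⁻ s in Icc (0:ℝ) T, Lag xs vs ys ws H (γ s) (g s)) ≤ ENNReal.ofReal M →
          ∀ t ∈ Icc (0:ℝ) T, γ t ∈ K' :=
  compact_containment_of_bounded_cost_general xs vs ys ws H Υ hΥ
end
end

section
/- Uniform coercivity of the interior Hamiltonian on the orthant (claim (5.6) in the proof of Theorem 4.14): Let E = [0,∞)^d, let H_0 : E × ℝ^d → ℝ be continuous with p ↦ H_0(x,p) convex for each x, let a_i, b_i : E → [0,∞) be continuous, and assume Condition (multi-d). Then for every compact set K ⊆ E, lim_{|p|→∞} inf_{x∈K} H_∅(x,p) = ∞, where H_∅(x,p) = H_0(x,p) + Σ_{k=1}^d [a_k(x)(e^{p_k}−1) + b_k(x)(e^{−p_k}−1)]. -/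
open Set Filter

noncomputable section

/-- The nonnegative orthant `E = [0,∞)^d`. -/
def orthant (d : ℕ) : Set (Euc d) := {x | ∀ i, 0 ≤ x i}

/-- The full Hamiltonian `H_∅(x,p) = H_0(x,p) + Σ_k [a_k(x)(e^{p_k}−1) + b_k(x)(e^{−p_k}−1)]`. -/
def Hempty {d : ℕ} (H0 : Euc d → Euc d → ℝ) (a b : Fin d → Euc d → ℝ)
    (x p : Euc d) : ℝ :=
  H0 x p + ∑ k : Fin d, (a k x * (Real.exp (p k) - 1) + b k x * (Real.exp (-(p k)) - 1))

/-- Condition (multi-d): alternative (a) or alternative (b). -/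
def CondMultiD {d : ℕ} (H0 : Euc d → Euc d → ℝ) (a b : Fin d → Euc d → ℝ) : Prop :=
  ((∀ K ⊆ orthant d, IsCompact K →
      ∃ M ≥ (0:ℝ), ∀ x ∈ K, ∀ p : Euc d, -(‖p‖ * M) ≤ H0 x p) ∧
    (∀ i, ∀ x ∈ orthant d, 0 < a i x ∧ 0 < b i x)) ∨
  ((∀ K ⊆ interior (orthant d), IsCompact K → K.Nonempty →
      ∃ M > (0:ℝ), ∀ M' < M, ∀ᶠ p : Euc d in Filter.cocompact (Euc d),
        ∀ x ∈ K, M' * ‖p‖ ≤ H0 x p) ∧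
    (∃ U : Set (Euc d), IsOpen U ∧ frontier (orthant d) ⊆ U ∧
      ∀ i, ∀ x ∈ U ∩ orthant d, 0 < a i x ∧ 0 < b i x))

/-!
Write `H_∅ = H_0 + J` with `J(x,p) = Σ_k [a_k(x)(e^{p_k}−1) + b_k(x)(e^{−p_k}−1)]`.
Where `a_k, b_k ≥ δ > 0`, `e^t + e^{−t} ≥ t²/2` gives `J(x,p) ≥ δ|p|²/2 − Σ_k (a_k + b_k)(x)`,
which beats any affine lower bound on `H_0`; where merely `a_k, b_k ≥ 0`, `J` is bounded below
and the superlinear growth of `H_0` wins. Under (a) the first case applies on all of `K`. Under (b),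
`K` splits into a compact piece in the open orthant (second case) and a compact piece in the
neighbourhood `U` of the boundary (first case); there the convex `H_0(x,·)`, bounded on the unit
ball uniformly in `x`, has an affine lower bound.
-/

open Topology

namespace Real

lemma sq_div_two_le_exp_add_exp_neg (t : ℝ) : t ^ 2 / 2 ≤ exp t + exp (-t) := by
  have h := quadratic_le_exp_of_nonneg (abs_nonneg t)
  rw [sq_abs] at h
  have hexp : exp |t| ≤ exp t + exp (-t) := by
    rcases abs_choice t with ht | ht <;> rw [ht] <;> linarith [exp_pos t, exp_pos (-t)]
  linarith [abs_nonneg t]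

lemma half_mul_sq_sub_le_mul_exp_add_mul_exp_neg {α β δ : ℝ} (hδ : 0 ≤ δ)
    (hα : δ ≤ α) (hβ : δ ≤ β) (t : ℝ) :
    δ / 2 * t ^ 2 - (α + β) ≤ α * (exp t - 1) + β * (exp (-t) - 1) := by
  have := mul_le_mul_of_nonneg_left (sq_div_two_le_exp_add_exp_neg t) hδ
  nlinarith [mul_le_mul_of_nonneg_right hα (exp_pos t).le,
    mul_le_mul_of_nonneg_right hβ (exp_pos (-t)).le]

end Real

section UniformlyCoercive

variable {X E : Type*} [NormedAddCommGroup E]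

def UniformlyCoerciveOn (H : X → E → ℝ) (K : Set X) : Prop :=
  ∀ C : ℝ, ∀ᶠ p in cocompact E, ∀ x ∈ K, C ≤ H x p

variable {H : X → E → ℝ} {K K₁ K₂ : Set X}

lemma uniformlyCoerciveOn_empty : UniformlyCoerciveOn H ∅ :=
  fun _ => .of_forall fun _ _ hx => hx.elim

lemma UniformlyCoerciveOn.union (h₁ : UniformlyCoerciveOn H K₁) (h₂ : UniformlyCoerciveOn H K₂) :
    UniformlyCoerciveOn H (K₁ ∪ K₂) := fun C => by
  filter_upwards [h₁ C, h₂ C] with p hp₁ hp₂ x hx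
  exact hx.elim (hp₁ x) (hp₂ x)

lemma UniformlyCoerciveOn.tendsto_sInf_image (h : UniformlyCoerciveOn H K) (hK : K.Nonempty) :
    Tendsto (fun p => sInf ((H · p) '' K)) (cocompact E) atTop :=
  tendsto_atTop.2 fun C => (h C).mono fun _ hp =>
    le_csInf (hK.image _) (forall_mem_image.2 hp)

lemma UniformlyCoerciveOn.of_forall_le [ProperSpace E] {φ : ℝ → ℝ} (hφ : Tendsto φ atTop atTop)
    (hle : ∀ᶠ p in cocompact E, ∀ x ∈ K, φ ‖p‖ ≤ H x p) : UniformlyCoerciveOn H K := fun C => by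
  filter_upwards [(hφ.comp tendsto_norm_cocompact_atTop).eventually_ge_atTop C, hle]
    with p hCp hp x hx
  exact hCp.trans (hp x hx)

end UniformlyCoercive

lemma ConvexOn.neg_le_of_forall_norm_le_one {E : Type*} [NormedAddCommGroup E]
    [NormedSpace ℝ E] {f : E → ℝ} (hf : ConvexOn ℝ univ f) {A : ℝ}
    (hA : ∀ q, ‖q‖ ≤ 1 → |f q| ≤ A) (p : E) : -(A + 2 * A * ‖p‖) ≤ f p := by
  have hA0 : 0 ≤ A := (abs_nonneg _).trans (hA 0 (by simp))
  rcases le_or_gt ‖p‖ 1 with hp | hp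
  · linarith [neg_abs_le (f p), hA p hp, mul_nonneg hA0 (norm_nonneg p)]
  -- Convexity between `0` and `p`, at the point `t • p` of the unit sphere.
  set t := ‖p‖⁻¹
  have ht : 0 < t := inv_pos.2 (one_pos.trans hp)
  have ht1 : t ≤ 1 := inv_le_one_of_one_le₀ hp.le
  have htp : t * ‖p‖ = 1 := inv_mul_cancel₀ (one_pos.trans hp).ne'
  have hconv := hf.2 (mem_univ 0) (mem_univ p) (sub_nonneg.2 ht1) ht.le (sub_add_cancel 1 t)
  rw [smul_zero, zero_add, smul_eq_mul, smul_eq_mul] at hconv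
  have h1 := hA (t • p) (by rw [norm_smul, Real.norm_of_nonneg ht.le, htp])
  have h0 := hA 0 (by simp)
  have key : -(2 * A) ≤ t * f p := by
    nlinarith [neg_abs_le (f (t • p)), le_abs_self (f 0)]
  calc -(A + 2 * A * ‖p‖) ≤ -(2 * A) * ‖p‖ := by linarith
    _ ≤ t * f p * ‖p‖ := mul_le_mul_of_nonneg_right key (norm_nonneg p)
    _ = f p := by rw [mul_right_comm, htp, one_mul]

lemma IsCompact.exists_pos_forall_le {X ι : Type*} [TopologicalSpace X] [Finite ι] {K : Set X}
    (hK : IsCompact K) {f : ι → X → ℝ} (hf : ∀ i, ContinuousOn (f i) K)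
    (hpos : ∀ i, ∀ x ∈ K, 0 < f i x) : ∃ δ > 0, ∀ i, ∀ x ∈ K, δ ≤ f i x := by
  have hδ : ∀ᶠ δ in 𝓝[>] (0 : ℝ), ∀ i, ∀ x ∈ K, δ ≤ f i x := eventually_all.2 fun i => by
    obtain ⟨m, hm, hle⟩ := hK.exists_forall_le' (hf i) (hpos i)
    filter_upwards [Ioc_mem_nhdsGT hm] with δ hδ x hx using hδ.2.trans (hle x hx)
  exact (hδ.and self_mem_nhdsWithin).exists.imp fun δ h => ⟨h.2, h.1⟩

section Hempty

variable {d : ℕ} {H0 : Euc d → Euc d → ℝ} {a b : Fin d → Euc d → ℝ}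

lemma le_Hempty {x : Euc d} {δ : ℝ} (hδ : 0 ≤ δ) (hab : ∀ k, δ ≤ a k x ∧ δ ≤ b k x)
    (p : Euc d) :
    H0 x p + (δ / 2 * ‖p‖ ^ 2 - ∑ k, (a k x + b k x)) ≤ Hempty H0 a b x p := by
  have hsum := Finset.sum_le_sum fun k (_ : k ∈ Finset.univ) =>
    Real.half_mul_sq_sub_le_mul_exp_add_mul_exp_neg hδ (hab k).1 (hab k).2 (p k)
  rw [Finset.sum_sub_distrib, ← Finset.mul_sum, ← EuclideanSpace.real_norm_sq_eq] at hsum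
  exact add_le_add_right hsum _

lemma exists_sum_le_of_isCompact {K : Set (Euc d)} (hK : IsCompact K)
    (hac : ∀ i, ContinuousOn (a i) K) (hbc : ∀ i, ContinuousOn (b i) K) :
    ∃ S, ∀ x ∈ K, ∑ k, (a k x + b k x) ≤ S := by
  obtain ⟨S, hS⟩ := hK.bddAbove_image <|
    continuousOn_finsetSum _ fun k _ => (hac k).add (hbc k)
  exact ⟨S, fun x hx => hS (mem_image_of_mem _ hx)⟩

lemma uniformlyCoerciveOn_Hempty_of_pos {K : Set (Euc d)} (hK : IsCompact K)
    (hac : ∀ i, ContinuousOn (a i) K) (hbc : ∀ i, ContinuousOn (b i) K)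
    (hpos : ∀ i, ∀ x ∈ K, 0 < a i x ∧ 0 < b i x) {A B : ℝ}
    (hH0 : ∀ x ∈ K, ∀ p, -(A + B * ‖p‖) ≤ H0 x p) :
    UniformlyCoerciveOn (Hempty H0 a b) K := by
  obtain ⟨δ, hδ, hab⟩ := hK.exists_pos_forall_le (fun i => (hac i).inf (hbc i))
    fun i x hx => lt_inf_iff.2 (hpos i x hx)
  obtain ⟨S, hS⟩ := exists_sum_le_of_isCompact hK hac hbc
  have hφ : Tendsto (fun r : ℝ => r * (δ / 2 * r - B) - (A + S)) atTop atTop :=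
    tendsto_atTop_add_const_right _ _ <| tendsto_id.atTop_mul_atTop₀ <|
      tendsto_atTop_add_const_right _ _ <| tendsto_id.const_mul_atTop (by positivity)
  refine .of_forall_le hφ (.of_forall fun p x hx => ?_)
  have := le_Hempty (H0 := H0) hδ.le (fun k => le_inf_iff.1 (hab k x hx)) p
  linarith [hH0 x hx p, hS x hx]

lemma uniformlyCoerciveOn_Hempty_of_superlinear {K : Set (Euc d)} (hK : IsCompact K)
    (hac : ∀ i, ContinuousOn (a i) K) (hbc : ∀ i, ContinuousOn (b i) K)
    (hann : ∀ i, ∀ x ∈ K, 0 ≤ a i x) (hbnn : ∀ i, ∀ x ∈ K, 0 ≤ b i x) {M : ℝ} (hM : 0 < M)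
    (hH0 : ∀ᶠ p in cocompact (Euc d), ∀ x ∈ K, M * ‖p‖ ≤ H0 x p) :
    UniformlyCoerciveOn (Hempty H0 a b) K := by
  obtain ⟨S, hS⟩ := exists_sum_le_of_isCompact hK hac hbc
  refine .of_forall_le (tendsto_atTop_add_const_right _ (-S) (tendsto_id.const_mul_atTop hM)) ?_
  filter_upwards [hH0] with p hp x hx
  have := le_Hempty (H0 := H0) le_rfl (fun k => ⟨hann k x hx, hbnn k x hx⟩) p
  simp only [id_eq]
  linarith [hp x hx, hS x hx]

end Hempty

lemma exists_neg_le_of_convexOn {X E : Type*} [TopologicalSpace X] [NormedAddCommGroup E]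
    [NormedSpace ℝ E] [ProperSpace E] {H : X → E → ℝ} {K : Set X} (hK : IsCompact K)
    (hc : ContinuousOn (fun q : X × E => H q.1 q.2) (K ×ˢ Metric.closedBall 0 1))
    (hconv : ∀ x ∈ K, ConvexOn ℝ univ (H x)) :
    ∃ A, ∀ x ∈ K, ∀ p, -(A + 2 * A * ‖p‖) ≤ H x p := by
  obtain ⟨A, hA⟩ := (hK.prod (isCompact_closedBall 0 1)).exists_bound_of_continuousOn hc
  refine ⟨A, fun x hx => (hconv x hx).neg_le_of_forall_norm_le_one fun q hq => ?_⟩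
  exact hA (x, q) ⟨hx, mem_closedBall_zero_iff.2 hq⟩

lemma subset_interior_union_of_frontier_subset {X : Type*} [TopologicalSpace X] {s U : Set X}
    (hU : frontier s ⊆ U) : s ⊆ interior s ∪ U := fun x hx =>
  (closure_eq_interior_union_frontier s ▸ subset_closure hx).imp_right (@hU x)

/-- Uniform coercivity of the interior Hamiltonian on the orthant (claim (5.6)):
under Condition (multi-d), for every nonempty compact `K ⊆ E`,
`inf_{x∈K} H_∅(x,p) → ∞` as `|p| → ∞`. -/
theorem orthant_uniform_coercivity {d : ℕ}
    (H0 : Euc d → Euc d → ℝ) (a b : Fin d → Euc d → ℝ)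
    (hH0c : ContinuousOn (fun q : Euc d × Euc d => H0 q.1 q.2) (orthant d ×ˢ univ))
    (hH0conv : ∀ x ∈ orthant d, ConvexOn ℝ univ (H0 x))
    (hac : ∀ i, ContinuousOn (a i) (orthant d))
    (hbc : ∀ i, ContinuousOn (b i) (orthant d))
    (hann : ∀ i, ∀ x ∈ orthant d, 0 ≤ a i x)
    (hbnn : ∀ i, ∀ x ∈ orthant d, 0 ≤ b i x)
    (hcond : CondMultiD H0 a b)
    (K : Set (Euc d)) (hKE : K ⊆ orthant d) (hK : IsCompact K) (hKne : K.Nonempty) :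
    Tendsto (fun p : Euc d => sInf ((fun x => Hempty H0 a b x p) '' K))
      (Filter.cocompact (Euc d)) atTop := by
  refine UniformlyCoerciveOn.tendsto_sInf_image ?_ hKne
  rcases hcond with ⟨hlin, hpos⟩ | ⟨hsuper, U, hU, hfrU, hUpos⟩
  · obtain ⟨M, -, hM⟩ := hlin K hKE hK
    exact uniformlyCoerciveOn_Hempty_of_pos hK (fun i => (hac i).mono hKE)
      (fun i => (hbc i).mono hKE) (fun i x hx => hpos i x (hKE hx)) (A := 0) (B := M)
      fun x hx p => by simpa [mul_comm] using hM x hx p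
  obtain ⟨K₁, K₂, hK₁, hK₂, hK₁int, hK₂U, rfl⟩ := hK.binary_compact_cover isOpen_interior hU
    (hKE.trans (subset_interior_union_of_frontier_subset hfrU))
  have hK₁E : K₁ ⊆ orthant d := subset_union_left.trans hKE
  have hK₂E : K₂ ⊆ orthant d := subset_union_right.trans hKE
  refine .union ?_ ?_
  · rcases K₁.eq_empty_or_nonempty with rfl | hK₁ne
    · exact uniformlyCoerciveOn_empty
    obtain ⟨M, hM, hsuperK₁⟩ := hsuper K₁ hK₁int hK₁ hK₁ne
    exact uniformlyCoerciveOn_Hempty_of_superlinear hK₁ (fun i => (hac i).mono hK₁E)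
      (fun i => (hbc i).mono hK₁E) (fun i x hx => hann i x (hK₁E hx))
      (fun i x hx => hbnn i x (hK₁E hx)) (half_pos hM) (hsuperK₁ _ (half_lt_self hM))
  · obtain ⟨A, hA⟩ := exists_neg_le_of_convexOn hK₂ (hH0c.mono (prod_mono hK₂E (subset_univ _)))
      fun x hx => hH0conv x (hK₂E hx)
    exact uniformlyCoerciveOn_Hempty_of_pos hK₂ (fun i => (hac i).mono hK₂E)
      (fun i => (hbc i).mono hK₂E) (fun i x hx => hUpos i x ⟨hK₂U hx, hK₂E hx⟩) hA
end
end

section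
/- Good containment function for birth–death processes with immigration (Lemma 5.2): Let λ, μ, ρ : [0,∞) → [0,∞) be continuous functions and suppose there exist constants C > 0 and M ≥ e such that λ(x) + ρ(x) ≤ C·x·log x for all x ≥ M. Define H(x,p) = (λ(x)+ρ(x))(e^p − 1) + μ(x)(e^{−p} − 1) for x ≥ 0, p ∈ ℝ. Then there exists a twice continuously differentiable function Υ : [0,∞) → [0,∞) such that Υ(x₀) = 0 for some x₀ ∈ [0,∞), the sublevel set {x ≥ 0 : Υ(x) ≤ c} is compact for every c ≥ 0, and sup_{x≥0} H(x, Υ'(x)) < ∞. -/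
/-! The containment function is `Υ(x) = log log (x + e)`. Its derivative
`((x + e) log (x + e))⁻¹` lies in `[0, 1]`, so the death term of `H(x, Υ'(x))` is nonpositive
and the birth term is at most `2 (λ + ρ)(x) Υ'(x)`. On a compact interval this is bounded by
continuity, and beyond it the growth bound `λ + ρ ≤ C x log x` is exactly compensated by
`Υ'(x) ≤ (x log x)⁻¹`. -/

open Set Real

noncomputable def logLogShift (x : ℝ) : ℝ := log (log (x + exp 1))

lemma one_le_log_add_exp_one {x : ℝ} (hx : 0 ≤ x) : 1 ≤ log (x + exp 1) :=
  (le_log_iff_exp_le (by positivity)).2 (by linarith)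

lemma one_le_add_exp_one_mul_log {x : ℝ} (hx : 0 ≤ x) :
    1 ≤ (x + exp 1) * log (x + exp 1) :=
  one_le_mul_of_one_le_of_one_le (by linarith [add_one_le_exp 1]) (one_le_log_add_exp_one hx)

lemma hasDerivAt_logLogShift {x : ℝ} (hx : 0 ≤ x) :
    HasDerivAt logLogShift ((x + exp 1) * log (x + exp 1))⁻¹ x := by
  have hlog := (((hasDerivAt_id' x).add_const (exp 1)).log (by positivity)).log
    (one_pos.trans_le (one_le_log_add_exp_one hx)).ne'
  rwa [div_div, one_div] at hlog

lemma derivWithin_logLogShift {x : ℝ} (hx : 0 ≤ x) :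
    derivWithin logLogShift (Ici 0) x = ((x + exp 1) * log (x + exp 1))⁻¹ :=
  (hasDerivAt_logLogShift hx).hasDerivWithinAt.derivWithin (uniqueDiffOn_Ici 0 x hx)

lemma contDiffOn_logLogShift : ContDiffOn ℝ 2 logLogShift (Ici 0) := fun x (hx : 0 ≤ x) =>
  ((contDiffAt_id.add contDiffAt_const).log (add_pos_of_nonneg_of_pos hx (exp_pos 1)).ne'
    |>.log (one_pos.trans_le (one_le_log_add_exp_one hx)).ne').contDiffWithinAt

lemma logLogShift_nonneg {x : ℝ} (hx : 0 ≤ x) : 0 ≤ logLogShift x :=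
  log_nonneg (one_le_log_add_exp_one hx)

lemma logLogShift_zero : logLogShift 0 = 0 := by
  simp [logLogShift]

lemma isCompact_logLogShift_sublevel (c : ℝ) :
    IsCompact {x : ℝ | x ∈ Ici 0 ∧ logLogShift x ≤ c} := by
  refine (isCompact_Icc (a := 0) (b := exp (exp c))).of_isClosed_subset
    (contDiffOn_logLogShift.continuousOn.preimage_isClosed_of_isClosed isClosed_Ici isClosed_Iic)
    ?_
  rintro x ⟨hx : 0 ≤ x, hxc⟩
  have hlog : log (x + exp 1) ≤ exp c :=
    (log_le_iff_le_exp (one_pos.trans_le (one_le_log_add_exp_one hx))).1 hxc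
  have : x + exp 1 ≤ exp (exp c) := (log_le_iff_le_exp (by positivity)).1 hlog
  exact ⟨hx, by linarith [exp_pos 1]⟩

lemma exists_mul_inv_add_exp_one_mul_log_le {f : ℝ → ℝ} (hf : ContinuousOn f (Ici 0))
    {C M : ℝ} (hC : 0 ≤ C) (hgrowth : ∀ x ≥ M, f x ≤ C * x * log x) :
    ∃ K, ∀ x ∈ Ici (0 : ℝ), f x * ((x + exp 1) * log (x + exp 1))⁻¹ ≤ K := by
  obtain ⟨B, hB⟩ := (isCompact_Icc.image_of_continuousOn
    (hf.mono (Icc_subset_Ici_self : Icc 0 (max M 1) ⊆ Ici 0))).bddAbove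
  refine ⟨max (max B 0) C, fun x hx => ?_⟩
  have hg := one_le_add_exp_one_mul_log hx
  rcases le_or_gt x (max M 1) with hxM | hxM
  · have hfx : f x ≤ max B 0 := (hB ⟨x, ⟨hx, hxM⟩, rfl⟩).trans (le_max_left _ _)
    calc f x * ((x + exp 1) * log (x + exp 1))⁻¹
        ≤ max B 0 * ((x + exp 1) * log (x + exp 1))⁻¹ := by gcongr
      _ ≤ max B 0 * 1 := by gcongr; exact inv_le_one_of_one_le₀ hg
      _ ≤ max (max B 0) C := by simp
  · have hx1 : 1 ≤ x := (le_max_right _ _).trans hxM.le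
    have hx_ge : exp (-1) ≤ x := by linarith [exp_neg_one_lt_half]
    have hmono : x * log x ≤ (x + exp 1) * log (x + exp 1) :=
      mul_log_strictMonoOn.monotoneOn hx_ge (show exp (-1) ≤ x + exp 1 by linarith [exp_pos 1])
        (by linarith [exp_pos 1])
    calc f x * ((x + exp 1) * log (x + exp 1))⁻¹
        ≤ C * ((x + exp 1) * log (x + exp 1)) * ((x + exp 1) * log (x + exp 1))⁻¹ := by
          gcongr
          calc f x ≤ C * x * log x := hgrowth x ((le_max_left _ _).trans hxM.le)
            _ ≤ C * ((x + exp 1) * log (x + exp 1)) := by rw [mul_assoc]; gcongr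
      _ = C := mul_inv_cancel_right₀ (zero_lt_one.trans_le hg).ne' C
      _ ≤ max (max B 0) C := le_max_right _ _

lemma birth_death_hamiltonian_le {a m p : ℝ} (ha : 0 ≤ a) (hm : 0 ≤ m) (hp0 : 0 ≤ p)
    (hp1 : p ≤ 1) : a * (exp p - 1) + m * (exp (-p) - 1) ≤ 2 * (a * p) := by
  have hbirth : exp p - 1 ≤ 2 * p := by
    simpa [abs_of_nonneg hp0] using (abs_le.1 (abs_exp_sub_one_le (abs_le.2 ⟨by linarith, hp1⟩))).2
  have hdeath : exp (-p) - 1 ≤ 0 := by linarith [exp_le_one_iff.2 (neg_nonpos.2 hp0)]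
  nlinarith [mul_le_mul_of_nonneg_left hbirth ha, mul_nonpos_of_nonneg_of_nonpos hm hdeath]

theorem bd_immigration_good_containment_general
    (lam mu rho : ℝ → ℝ)
    (hlamc : ContinuousOn lam (Ici 0))
    (hrhoc : ContinuousOn rho (Ici 0))
    (hlam0 : ∀ x ∈ Ici (0:ℝ), 0 ≤ lam x) (hmu0 : ∀ x ∈ Ici (0:ℝ), 0 ≤ mu x)
    (hrho0 : ∀ x ∈ Ici (0:ℝ), 0 ≤ rho x)
    (hgrowth : ∃ C > (0:ℝ), ∃ M ≥ Real.exp 1, ∀ x ≥ M,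
      lam x + rho x ≤ C * x * Real.log x) :
    ∃ Υ : ℝ → ℝ, ContDiffOn ℝ 2 Υ (Ici 0) ∧ (∀ x ∈ Ici (0:ℝ), 0 ≤ Υ x) ∧
      (∃ x₀ ∈ Ici (0:ℝ), Υ x₀ = 0) ∧
      (∀ c : ℝ, 0 ≤ c → IsCompact {x : ℝ | x ∈ Ici 0 ∧ Υ x ≤ c}) ∧
      ∃ C' : ℝ, ∀ x ∈ Ici (0:ℝ),
        (lam x + rho x) * (Real.exp (derivWithin Υ (Ici 0) x) - 1) +
          mu x * (Real.exp (-(derivWithin Υ (Ici 0) x)) - 1) ≤ C' := by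
  obtain ⟨C, hC, M, -, hgr⟩ := hgrowth
  obtain ⟨K, hK⟩ := exists_mul_inv_add_exp_one_mul_log_le (hlamc.add hrhoc) hC.le hgr
  refine ⟨logLogShift, contDiffOn_logLogShift, fun x hx => logLogShift_nonneg hx,
    ⟨0, self_mem_Ici, logLogShift_zero⟩, fun c _ => isCompact_logLogShift_sublevel c,
    2 * K, fun x hx => ?_⟩
  have hg := one_le_add_exp_one_mul_log hx
  rw [derivWithin_logLogShift hx]
  calc _ ≤ 2 * ((lam x + rho x) * ((x + exp 1) * log (x + exp 1))⁻¹) :=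
        birth_death_hamiltonian_le (add_nonneg (hlam0 x hx) (hrho0 x hx)) (hmu0 x hx)
          (inv_nonneg.2 (zero_le_one.trans hg)) (inv_le_one_of_one_le₀ hg)
    _ ≤ 2 * K := mul_le_mul_of_nonneg_left (hK x hx) zero_le_two

/-- Good containment function for birth–death processes with immigration (Lemma 5.2):
if `λ, μ, ρ : [0,∞) → [0,∞)` are continuous and `λ + ρ` grows at most like `C·x·log x`
at infinity, then the Hamiltonian `H(x,p) = (λ(x)+ρ(x))(e^p−1) + μ(x)(e^{−p}−1)` admits
a good containment function `Υ`. -/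
theorem bd_immigration_good_containment
    (lam mu rho : ℝ → ℝ)
    (hlamc : ContinuousOn lam (Ici 0)) (hmuc : ContinuousOn mu (Ici 0))
    (hrhoc : ContinuousOn rho (Ici 0))
    (hlam0 : ∀ x ∈ Ici (0:ℝ), 0 ≤ lam x) (hmu0 : ∀ x ∈ Ici (0:ℝ), 0 ≤ mu x)
    (hrho0 : ∀ x ∈ Ici (0:ℝ), 0 ≤ rho x)
    (hgrowth : ∃ C > (0:ℝ), ∃ M ≥ Real.exp 1, ∀ x ≥ M,
      lam x + rho x ≤ C * x * Real.log x) :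
    ∃ Υ : ℝ → ℝ, ContDiffOn ℝ 2 Υ (Ici 0) ∧ (∀ x ∈ Ici (0:ℝ), 0 ≤ Υ x) ∧
      (∃ x₀ ∈ Ici (0:ℝ), Υ x₀ = 0) ∧
      (∀ c : ℝ, 0 ≤ c → IsCompact {x : ℝ | x ∈ Ici 0 ∧ Υ x ≤ c}) ∧
      ∃ C' : ℝ, ∀ x ∈ Ici (0:ℝ),
        (lam x + rho x) * (Real.exp (derivWithin Υ (Ici 0) x) - 1) +
          mu x * (Real.exp (-(derivWithin Υ (Ici 0) x)) - 1) ≤ C' :=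
  bd_immigration_good_containment_general lam mu rho hlamc hrhoc hlam0 hmu0 hrho0 hgrowth
end

section
/- Good containment function for growing populations (Lemma 5.3): Let v_k : (0,∞) → [0,∞), k ≥ 1, be continuous functions such that (a) Σ_{k=1}^∞ v_k(x) > 0 for all x > 0, (b) the function x ↦ Σ_{k=1}^∞ k·v_k(x) is bounded on (0,∞), and (c) there exists α > 0 with sup_{x>0} Σ_{k=1}^∞ x·v_k(x)·(k²/(1+x)²)·e^{αk/(1+x)} < ∞. Define H(x,p) = Σ_{k=1}^∞ x·v_k(x)(e^{kp} − 1) for x > 0, p ∈ ℝ. Then there exists a twice continuously differentiable function Υ : (0,∞) → [0,∞) such that Υ(x₀) = 0 for some x₀ ∈ (0,∞), the sublevel set {x > 0 : Υ(x) ≤ c} is compact in (0,∞) for every c ≥ 0, and sup_{x>0} H(x, Υ'(x)) < ∞. -/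
/-!
Take `Υ(x) = α log ((1 + x) / (2 √x))` with `α` from condition (c). It is nonnegative by
AM–GM, vanishes at `x = 1` and tends to `∞` at `0` and at `∞`, so its sublevel sets are
compact in `(0, ∞)`. Its derivative satisfies `Υ' ≤ α / (1 + x)`, hence `x Υ' ≤ α`. For
`p = Υ'(x) > 0` the bound `e^s - 1 ≤ s + s² e^s` splits each term of `H(x, p)` into `α k v_k(x)`, controlled by
(b), and `α² x v_k(x) k² / (1 + x)² e^{α k / (1 + x)}`, controlled by (c); for `p ≤ 0` every
term is nonpositive.
-/

open Set Real

namespace Real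

lemma exp_sub_one_le_mul_exp (t : ℝ) : exp t - 1 ≤ t * exp t := by
  have h := mul_le_mul_of_nonneg_right (add_one_le_exp (-t)) (exp_pos t).le
  rw [← exp_add, neg_add_cancel, exp_zero] at h
  linarith

lemma exp_sub_one_le_add_sq_mul_exp {t : ℝ} (ht : 0 ≤ t) : exp t - 1 ≤ t + t ^ 2 * exp t := by
  nlinarith [exp_sub_one_le_mul_exp t]

end Real

lemma summable_and_tsum_le_of_tsum_ofReal_le {f : ℕ → ℝ} (hf : ∀ k, 0 ≤ f k) {B : ℝ}
    (h : ∑' k, ENNReal.ofReal (f k) ≤ ENNReal.ofReal B) :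
    Summable f ∧ ∑' k, f k ≤ max B 0 := by
  have hs : Summable f := by
    simpa [ENNReal.toReal_ofReal (hf _)] using
      ENNReal.summable_toReal (h.trans_lt ENNReal.ofReal_lt_top).ne
  refine ⟨hs, (ENNReal.ofReal_le_ofReal_iff (le_max_right _ _)).mp ?_⟩
  rw [ENNReal.ofReal_tsum_of_nonneg hf hs]
  exact h.trans (ENNReal.ofReal_le_ofReal (le_max_left _ _))

/-- No summability of `f` is needed: otherwise `∑' k, f k = 0`. -/
lemma tsum_le_tsum_of_summable_of_nonneg {f g : ℕ → ℝ} (h : ∀ k, f k ≤ g k)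
    (hg : Summable g) (hg0 : ∀ k, 0 ≤ g k) : ∑' k, f k ≤ ∑' k, g k := by
  by_cases hf : Summable f
  · exact hf.tsum_le_tsum h hg
  · rw [tsum_eq_zero_of_not_summable hf]
    exact tsum_nonneg hg0

lemma isCompact_setOf_pos_and_le {f : ℝ → ℝ} (hf : ContinuousOn f (Ioi 0)) {a b c : ℝ}
    (ha : 0 < a) (hsub : ∀ x, 0 < x → f x ≤ c → x ∈ Icc a b) :
    IsCompact {x | 0 < x ∧ f x ≤ c} := by
  have hab : Icc a b ⊆ Ioi 0 := fun x hx => ha.trans_le hx.1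
  have hset : {x | 0 < x ∧ f x ≤ c} = Icc a b ∩ f ⁻¹' Iic c :=
    Set.ext fun x => ⟨fun hx => ⟨hsub x hx.1 hx.2, hx.2⟩, fun hx => ⟨hab hx.1, hx.2⟩⟩
  rw [hset]
  exact isCompact_Icc.of_isClosed_subset
    ((hf.mono hab).preimage_isClosed_of_isClosed isClosed_Icc isClosed_Iic) inter_subset_left

noncomputable def containmentFun (α x : ℝ) : ℝ := α * (log (1 + x) - log x / 2 - log 2)

section
variable {α : ℝ}

lemma contDiffOn_containmentFun : ContDiffOn ℝ 2 (containmentFun α) (Ioi 0) := by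
  unfold containmentFun
  refine contDiffOn_const.mul (ContDiffOn.sub (ContDiffOn.sub ?_ ?_) contDiffOn_const)
  · exact (contDiffOn_const.add contDiffOn_id).log fun x (hx : 0 < x) => by simp only [id_eq]; positivity
  · exact (contDiffOn_id.log fun x (hx : 0 < x) => hx.ne').div_const 2

lemma containmentFun_one : containmentFun α 1 = 0 := by
  rw [containmentFun, log_one, one_add_one_eq_two]; ring

lemma hasDerivAt_containmentFun {x : ℝ} (hx : 0 < x) :
    HasDerivAt (containmentFun α) (α * ((1 + x)⁻¹ - x⁻¹ / 2)) x := by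
  have h1 : HasDerivAt (fun y => log (1 + y)) (1 + x)⁻¹ x := by
    simpa using ((hasDerivAt_id x).const_add 1).log (by positivity)
  exact ((h1.sub ((hasDerivAt_log hx.ne').div_const 2)).sub_const (log 2)).const_mul α

lemma derivWithin_containmentFun_le {x : ℝ} (hα : 0 ≤ α) (hx : 0 < x) :
    derivWithin (containmentFun α) (Ioi 0) x ≤ α / (1 + x) := by
  rw [derivWithin_of_isOpen isOpen_Ioi hx, (hasDerivAt_containmentFun hx).deriv]
  have : 0 ≤ α * x⁻¹ / 2 := by positivity
  calc α * ((1 + x)⁻¹ - x⁻¹ / 2) = α / (1 + x) - α * x⁻¹ / 2 := by ring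
    _ ≤ α / (1 + x) := by linarith

lemma containmentFun_nonneg (hα : 0 ≤ α) {x : ℝ} (hx : 0 < x) :
    0 ≤ containmentFun α x := by
  have hsqrt : 0 < √x := sqrt_pos.mpr hx
  have hamgm : 2 * √x ≤ 1 + x := by nlinarith [sq_nonneg (1 - √x), sq_sqrt hx.le]
  have h := log_le_log (by positivity) hamgm
  rw [log_mul two_ne_zero hsqrt.ne', log_sqrt hx.le] at h
  exact mul_nonneg hα (by linarith)

lemma mem_Icc_of_containmentFun_le (hα : 0 < α) {x c : ℝ} (hx : 0 < x)
    (hc : containmentFun α x ≤ c) :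
    x ∈ Icc (exp (-(2 * (c / α + log 2)))) (exp (2 * (c / α + log 2))) := by
  have hM : log (1 + x) - log x / 2 ≤ c / α + log 2 := by
    rw [containmentFun, ← le_div_iff₀' hα] at hc; linarith
  have hlog : log x ≤ log (1 + x) := log_le_log hx (by linarith)
  have hlog1 : 0 ≤ log (1 + x) := log_nonneg (by linarith)
  constructor
  · rw [← exp_log hx, exp_le_exp]; linarith
  · calc x ≤ exp (log (1 + x)) := by rw [exp_log (by positivity)]; linarith
      _ ≤ _ := exp_le_exp.mpr (by linarith)

lemma isCompact_containmentFun_sublevel (hα : 0 < α) (c : ℝ) :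
    IsCompact {x | 0 < x ∧ containmentFun α x ≤ c} :=
  isCompact_setOf_pos_and_le contDiffOn_containmentFun.continuousOn (exp_pos _)
    fun _ hx hc => mem_Icc_of_containmentFun_le hα hx hc

end

lemma mul_exp_sub_one_le {α x p u : ℝ} (k : ℕ) (hα : 0 ≤ α) (hx : 0 < x) (hu : 0 ≤ u)
    (hp : p ≤ α / (1 + x)) :
    x * u * (exp (k * p) - 1) ≤
      α * (k * u) + α ^ 2 * (x * u * (k ^ 2 / (1 + x) ^ 2) * exp (α * k / (1 + x))) := by
  rcases le_or_gt p 0 with hp0 | hp0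
  · have hexp : exp (k * p) ≤ 1 :=
      exp_le_one_iff.mpr (mul_nonpos_of_nonneg_of_nonpos k.cast_nonneg hp0)
    have hlhs : x * u * (exp (k * p) - 1) ≤ 0 :=
      mul_nonpos_of_nonneg_of_nonpos (by positivity) (by linarith)
    exact hlhs.trans (by positivity)
  have hxp : x * p ≤ α := calc
    x * p ≤ x * (α / (1 + x)) := by gcongr
    _ ≤ α := by rw [mul_div_assoc', div_le_iff₀ (by positivity)]; nlinarith
  have hkp : k * p ≤ α * k / (1 + x) := by
    rw [mul_div_right_comm, mul_comm]; gcongr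
  have hkp0 : 0 ≤ (k : ℝ) * p := by positivity
  calc x * u * (exp (k * p) - 1) ≤ x * u * (k * p + (k * p) ^ 2 * exp (k * p)) := by
        gcongr; exact exp_sub_one_le_add_sq_mul_exp hkp0
    _ = (x * p) * (k * u) + x * u * (k * p) ^ 2 * exp (k * p) := by ring
    _ ≤ α * (k * u) + x * u * (α * k / (1 + x)) ^ 2 * exp (α * k / (1 + x)) := by gcongr
    _ = _ := by rw [div_pow]; ring

lemma tsum_mul_exp_sub_one_le {α x p : ℝ} {u : ℕ → ℝ} (hα : 0 ≤ α) (hx : 0 < x)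
    (hu : ∀ k, 0 ≤ u k) (hp : p ≤ α / (1 + x)) (h₁ : Summable fun k : ℕ => k * u k)
    (h₂ : Summable fun k : ℕ => x * u k * (k ^ 2 / (1 + x) ^ 2) * exp (α * k / (1 + x))) :
    ∑' k : ℕ, x * u k * (exp (k * p) - 1) ≤
      α * ∑' k : ℕ, k * u k +
        α ^ 2 * ∑' k : ℕ, x * u k * (k ^ 2 / (1 + x) ^ 2) * exp (α * k / (1 + x)) := by
  rw [← tsum_mul_left, ← tsum_mul_left, ← (h₁.mul_left α).tsum_add (h₂.mul_left _)]
  refine tsum_le_tsum_of_summable_of_nonneg (fun k => mul_exp_sub_one_le k hα hx (hu k) hp)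
    ((h₁.mul_left α).add (h₂.mul_left _)) fun k => ?_
  have := hu k
  positivity

theorem growing_population_good_containment_general
    (v : ℕ → ℝ → ℝ)
    (hvnn : ∀ k, ∀ x ∈ Ioi (0:ℝ), 0 ≤ v k x)
    (hbdd : ∃ B : ℝ, ∀ x ∈ Ioi (0:ℝ),
      (∑' k : ℕ, ENNReal.ofReal ((k : ℝ) * v k x)) ≤ ENNReal.ofReal B)
    (hexp : ∃ α > (0:ℝ), ∃ B : ℝ, ∀ x ∈ Ioi (0:ℝ),
      (∑' k : ℕ, ENNReal.ofReal
        (x * v k x * ((k : ℝ) ^ 2 / (1 + x) ^ 2) * Real.exp (α * k / (1 + x))))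
        ≤ ENNReal.ofReal B) :
    ∃ Υ : ℝ → ℝ, ContDiffOn ℝ 2 Υ (Ioi 0) ∧ (∀ x ∈ Ioi (0:ℝ), 0 ≤ Υ x) ∧
      (∃ x₀ ∈ Ioi (0:ℝ), Υ x₀ = 0) ∧
      (∀ c : ℝ, 0 ≤ c → IsCompact {x : ℝ | 0 < x ∧ Υ x ≤ c}) ∧
      ∃ C' : ℝ, ∀ x ∈ Ioi (0:ℝ),
        (∑' k : ℕ, x * v k x * (Real.exp ((k : ℝ) * derivWithin Υ (Ioi 0) x) - 1)) ≤ C' := by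
  obtain ⟨B₁, hB₁⟩ := hbdd
  obtain ⟨α, hα, B₂, hB₂⟩ := hexp
  refine ⟨containmentFun α, contDiffOn_containmentFun,
    fun x hx => containmentFun_nonneg hα.le hx, ⟨1, mem_Ioi.mpr one_pos, containmentFun_one⟩,
    fun c _ => isCompact_containmentFun_sublevel hα c,
    α * max B₁ 0 + α ^ 2 * max B₂ 0, fun x (hx : 0 < x) => ?_⟩
  have hv (k : ℕ) : 0 ≤ v k x := hvnn k x hx
  obtain ⟨hs₁, ht₁⟩ := summable_and_tsum_le_of_tsum_ofReal_le
    (fun k => mul_nonneg k.cast_nonneg (hv k)) (hB₁ x hx)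
  obtain ⟨hs₂, ht₂⟩ := summable_and_tsum_le_of_tsum_ofReal_le
    (fun k => by have := hv k; positivity) (hB₂ x hx)
  calc _ ≤ _ := tsum_mul_exp_sub_one_le hα.le hx hv
        (derivWithin_containmentFun_le hα.le hx) hs₁ hs₂
    _ ≤ _ := by gcongr

/-- Good containment function for growing populations (Lemma 5.3): under conditions
(a), (b), (c) on the offspring rates `v_k` (indexed by `k ≥ 1`; we use `v : ℕ → ℝ → ℝ`
with `v 0 = 0`), the Hamiltonian `H(x,p) = Σ_k x·v_k(x)(e^{kp} − 1)` on `(0,∞)` admits a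
good containment function `Υ`. -/
theorem growing_population_good_containment
    (v : ℕ → ℝ → ℝ) (hv0 : ∀ x, v 0 x = 0)
    (hvc : ∀ k, ContinuousOn (v k) (Ioi 0))
    (hvnn : ∀ k, ∀ x ∈ Ioi (0:ℝ), 0 ≤ v k x)
    (hsum_pos : ∀ x ∈ Ioi (0:ℝ), 0 < ∑' k : ℕ, ENNReal.ofReal (v k x))
    (hbdd : ∃ B : ℝ, ∀ x ∈ Ioi (0:ℝ),
      (∑' k : ℕ, ENNReal.ofReal ((k : ℝ) * v k x)) ≤ ENNReal.ofReal B)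
    (hexp : ∃ α > (0:ℝ), ∃ B : ℝ, ∀ x ∈ Ioi (0:ℝ),
      (∑' k : ℕ, ENNReal.ofReal
        (x * v k x * ((k : ℝ) ^ 2 / (1 + x) ^ 2) * Real.exp (α * k / (1 + x))))
        ≤ ENNReal.ofReal B) :
    ∃ Υ : ℝ → ℝ, ContDiffOn ℝ 2 Υ (Ioi 0) ∧ (∀ x ∈ Ioi (0:ℝ), 0 ≤ Υ x) ∧
      (∃ x₀ ∈ Ioi (0:ℝ), Υ x₀ = 0) ∧
      (∀ c : ℝ, 0 ≤ c → IsCompact {x : ℝ | 0 < x ∧ Υ x ≤ c}) ∧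
      ∃ C' : ℝ, ∀ x ∈ Ioi (0:ℝ),
        (∑' k : ℕ, x * v k x * (Real.exp ((k : ℝ) * derivWithin Υ (Ioi 0) x) - 1)) ≤ C' :=
  growing_population_good_containment_general v hvnn hbdd hexp
end
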